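/- arXiv:2107.03490 — 10 statements merged into one kernel-verified Lean document; each statement's English description precedes it below -/
import Mathlib

section
/- Let X be a finite-dimensional real polyhedral Banach space and T : X → X linear. If f(Tx) = 0 for every x in the unit sphere and every support functional f at x (i.e., f(x) = ‖x‖ = ‖f‖ = 1), then T = 0. Consequently, the numerical radius ‖·‖_w is a norm on L(X). -/
/-!
Let `g` be an extreme point of the dual unit ball. The hypothesis says that `g ∘ T` vanishes on
the face `{g = 1}` of the unit ball. As the ball is the convex hull of finitely many vertices,
this yields `|g (T x)| ≤ K (1 - g x)` on the ball for some `K > 0`, so `g ± K⁻¹ (g ∘ T)` stay in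
the dual ball and extremality forces `g ∘ T = 0`. By Krein–Milman every functional of the dual
ball is a limit of convex combinations of extreme points, so all of them kill `T y`, and `T = 0`.
-/

/-- The numerical radius of a bounded linear operator. -/
noncomputable def nrad {𝕜 X : Type*} [RCLike 𝕜] [NormedAddCommGroup X] [NormedSpace 𝕜 X]
    (T : X →L[𝕜] X) : ℝ :=
  sSup {r : ℝ | ∃ (x : X) (f : X →L[𝕜] 𝕜), ‖x‖ = 1 ∧ ‖f‖ = 1 ∧ f x = 1 ∧ r = ‖f (T x)‖}

open Set Metric

theorem eq_zero_of_add_mem_of_sub_mem_of_mem_extremePoints {E : Type*} [AddCommGroup E]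
    [Module ℝ E] {A : Set E} {x y : E} (hx : x ∈ A.extremePoints ℝ) (hadd : x + y ∈ A)
    (hsub : x - y ∈ A) : y = 0 := by
  have hmid : x ∈ openSegment ℝ (x - y) (x + y) :=
    ⟨1 / 2, 1 / 2, by norm_num, by norm_num, by norm_num, by module⟩
  simpa using hx.2 hsub hadd hmid

theorem convexHull_extremePoints_eq {E : Type*} [AddCommGroup E] [Module ℝ E] [TopologicalSpace E]
    [T2Space E] [IsTopologicalAddGroup E] [ContinuousSMul ℝ E] [LocallyConvexSpace ℝ E]
    {s : Set E} (hs : IsCompact s) (hconv : Convex ℝ s) (hfin : (s.extremePoints ℝ).Finite) :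
    convexHull ℝ (s.extremePoints ℝ) = s := by
  rw [← (hfin.isCompact_convexHull ℝ).isClosed.closure_eq]
  exact closure_convexHull_extremePoints hs hconv

theorem exists_abs_le_mul_one_sub_on_convexHull {E : Type*} [AddCommGroup E] [Module ℝ E]
    {s : Set E} (hs : s.Finite) (g h : E →ₗ[ℝ] ℝ) (hg : ∀ e ∈ s, g e ≤ 1)
    (hh : ∀ e ∈ s, g e = 1 → h e = 0) :
    ∃ K > 0, ∀ x ∈ convexHull ℝ s, |h x| ≤ K * (1 - g x) := by
  -- at a vertex with `g e = 1` the summand is the junk value `|h e| / 0 = 0`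
  set S := ∑ e ∈ hs.toFinset, |h e| / (1 - g e)
  have hnonneg : ∀ e ∈ hs.toFinset, 0 ≤ |h e| / (1 - g e) := fun e he =>
    div_nonneg (abs_nonneg _) (sub_nonneg.2 (hg e (hs.mem_toFinset.1 he)))
  have hterm : ∀ e ∈ s, |h e| / (1 - g e) ≤ S := fun e he =>
    Finset.single_le_sum hnonneg (hs.mem_toFinset.2 he)
  have hS : 0 ≤ S := Finset.sum_nonneg hnonneg
  set K := S + 1
  refine ⟨K, by positivity, fun x hx => ?_⟩
  have hconv : Convex ℝ {x | |h x| ≤ K * (1 - g x)} := by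
    have hset : {x | |h x| ≤ K * (1 - g x)} =
        {x | (h + K • g) x ≤ K} ∩ {x | (-h + K • g) x ≤ K} := by
      ext x
      simp only [mem_ofPred_eq, mem_inter_iff, LinearMap.add_apply, LinearMap.neg_apply,
        LinearMap.smul_apply, smul_eq_mul, abs_le]
      constructor <;> rintro ⟨h₁, h₂⟩ <;> constructor <;> linarith
    rw [hset]
    exact (convex_halfSpace_le (h + K • g).isLinear K).inter
      (convex_halfSpace_le (-h + K • g).isLinear K)
  refine convexHull_min (fun e he => ?_) hconv hx
  rcases (hg e he).eq_or_lt with hge | hge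
  · simp [hh e he hge, hge]
  · have hpos : 0 < 1 - g e := sub_pos.2 hge
    calc |h e| = |h e| / (1 - g e) * (1 - g e) := by field_simp
      _ ≤ K * (1 - g e) := by gcongr; linarith [hterm e he]

section Dual

variable {X : Type*} [NormedAddCommGroup X] [NormedSpace ℝ X]

theorem norm_add_le_one_of_abs_le_one_sub {g h : X →L[ℝ] ℝ}
    (hgh : ∀ x, ‖x‖ ≤ 1 → |h x| ≤ 1 - g x) : ‖g + h‖ ≤ 1 := by
  refine ContinuousLinearMap.opNorm_le_of_unit_norm zero_le_one fun x hx => ?_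
  have hpos := abs_le.1 (hgh x hx.le)
  have hneg := abs_le.1 (hgh (-x) (by simpa using hx.le))
  simp only [map_neg] at hneg
  rw [add_apply, Real.norm_eq_abs, abs_le]
  constructor <;> linarith

theorem norm_eq_one_of_apply_eq_one {f : X →L[ℝ] ℝ} {x : X} (hf : ‖f‖ ≤ 1) (hx : ‖x‖ ≤ 1)
    (hfx : f x = 1) : ‖f‖ = 1 ∧ ‖x‖ = 1 := by
  have h₁ : 1 ≤ ‖f‖ * ‖x‖ := by simpa [hfx] using f.le_opNorm x
  constructor <;> nlinarith [norm_nonneg f, norm_nonneg x]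

variable [FiniteDimensional ℝ X]

theorem eq_zero_of_forall_mem_extremePoints_closedBall_dual {y : X}
    (h : ∀ g ∈ (closedBall (0 : X →L[ℝ] ℝ) 1).extremePoints ℝ, g y = 0) : y = 0 := by
  have hker : closedBall (0 : X →L[ℝ] ℝ) 1 ⊆ {g | g y = 0} := by
    rw [← closure_convexHull_extremePoints (isCompact_closedBall _ _) (convex_closedBall _ _)]
    exact closure_minimal
      (convexHull_min h (convex_hyperplane (ContinuousLinearMap.apply ℝ ℝ y).isLinear 0))
      (isClosed_eq (ContinuousLinearMap.apply ℝ ℝ y).continuous continuous_const)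
  obtain ⟨g, hg, hgy⟩ := exists_dual_vector'' ℝ y
  rw [hker (mem_closedBall_zero_iff.2 hg)] at hgy
  exact norm_eq_zero.1 hgy.symm

theorem eq_zero_of_mem_extremePoints_of_eq_zero_on_face
    (hpoly : ((closedBall (0 : X) 1).extremePoints ℝ).Finite) {g : X →L[ℝ] ℝ}
    (hg : g ∈ (closedBall (0 : X →L[ℝ] ℝ) 1).extremePoints ℝ) {h : X →L[ℝ] ℝ}
    (hh : ∀ x, ‖x‖ ≤ 1 → g x = 1 → h x = 0) : h = 0 := by
  have hgle : ∀ x, ‖x‖ ≤ 1 → g x ≤ 1 := fun x hx =>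
    (le_abs_self _).trans (g.le_of_opNorm_le (mem_closedBall_zero_iff.1 hg.1) x |>.trans
      (by nlinarith [norm_nonneg x]))
  have hvert : ∀ e ∈ (closedBall (0 : X) 1).extremePoints ℝ, ‖e‖ ≤ 1 := fun e he =>
    mem_closedBall_zero_iff.1 (extremePoints_subset he)
  obtain ⟨K, hK, hbound⟩ := exists_abs_le_mul_one_sub_on_convexHull hpoly g h
    (fun e he => hgle e (hvert e he)) (fun e he => hh e (hvert e he))
  rw [convexHull_extremePoints_eq (isCompact_closedBall _ _) (convex_closedBall _ _) hpoly]
    at hbound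
  have hsmall : ∀ x, ‖x‖ ≤ 1 → |(K⁻¹ • h) x| ≤ 1 - g x := fun x hx => by
    rw [smul_apply, smul_eq_mul, abs_mul, abs_of_pos (inv_pos.2 hK),
      inv_mul_le_iff₀ hK]
    exact hbound x (mem_closedBall_zero_iff.2 hx)
  have hzero : K⁻¹ • h = 0 := by
    refine eq_zero_of_add_mem_of_sub_mem_of_mem_extremePoints hg ?_ ?_
    · exact mem_closedBall_zero_iff.2 (norm_add_le_one_of_abs_le_one_sub hsmall)
    · rw [sub_eq_add_neg]
      exact mem_closedBall_zero_iff.2 (norm_add_le_one_of_abs_le_one_sub (by simpa using hsmall))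
  exact (smul_eq_zero.1 hzero).resolve_left (inv_ne_zero hK.ne')

theorem eq_zero_of_forall_support_apply_eq_zero
    (hpoly : ((closedBall (0 : X) 1).extremePoints ℝ).Finite) (T : X →L[ℝ] X)
    (h : ∀ (x : X) (f : X →L[ℝ] ℝ), ‖x‖ = 1 → ‖f‖ = 1 → f x = 1 → f (T x) = 0) : T = 0 := by
  ext y
  refine eq_zero_of_forall_mem_extremePoints_closedBall_dual fun g hg => ?_
  have hcomp : g.comp T = 0 := eq_zero_of_mem_extremePoints_of_eq_zero_on_face hpoly hg
    fun x hx hgx =>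
      have hnorm := norm_eq_one_of_apply_eq_one (mem_closedBall_zero_iff.1 hg.1) hx hgx
      h x g hnorm.2 hnorm.1 hgx
  exact DFunLike.congr_fun hcomp y

end Dual

theorem norm_apply_le_nrad {𝕜 X : Type*} [RCLike 𝕜] [NormedAddCommGroup X] [NormedSpace 𝕜 X]
    (T : X →L[𝕜] X) {x : X} {f : X →L[𝕜] 𝕜} (hx : ‖x‖ = 1) (hf : ‖f‖ = 1) (hfx : f x = 1) :
    ‖f (T x)‖ ≤ nrad T := by
  refine le_csSup ⟨‖T‖, ?_⟩ ⟨x, f, hx, hf, hfx, rfl⟩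
  rintro r ⟨x', f', hx', hf', -, rfl⟩
  calc ‖f' (T x')‖ ≤ ‖f'‖ * ‖T x'‖ := f'.le_opNorm _
    _ ≤ ‖T‖ := by simpa [hf'] using T.le_opNorm_of_le hx'.le

/-- on a finite-dimensional real polyhedral Banach space, if `f (T x) = 0`
for every unit vector `x` and every support functional `f` at `x`, then `T = 0`;
consequently the numerical radius is a norm on `L(X)`. -/
theorem polyhedral_numerical_radius_norm (X : Type*) [NormedAddCommGroup X]
    [NormedSpace ℝ X] [FiniteDimensional ℝ X]
    (hpoly : (Set.extremePoints ℝ (Metric.closedBall (0 : X) 1)).Finite)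
    (T : X →L[ℝ] X)
    (h : ∀ (x : X) (f : X →L[ℝ] ℝ), ‖x‖ = 1 → ‖f‖ = 1 → f x = 1 → f (T x) = 0) :
    T = 0 ∧ ∀ S : X →L[ℝ] X, nrad S = 0 → S = 0 := by
  refine ⟨eq_zero_of_forall_support_apply_eq_zero hpoly T h, fun S hS => ?_⟩
  refine eq_zero_of_forall_support_apply_eq_zero hpoly S fun x f hx hf hfx => ?_
  exact norm_le_zero_iff.1 (hS ▸ norm_apply_le_nrad S hx hf hfx)
end

section
/- Let x₀ be an extreme point of the unit ball of a finite-dimensional real polyhedral Banach space X of dimension n, and let T : X → X be linear with numerical radius 0. Then T x₀ = 0. -/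
/-!
Since the unit ball `B` has finitely many extreme points, `B` is a polyhedron: the dual ball is
cut out by the finitely many inequalities `φ e ≤ 1`, `e ∈ ext B`, hence has finitely many extreme
points, and by Krein–Milman these in turn cut out `B`. Near `x₀` only the inequalities active at
`x₀` matter, and an active `g` is a norming functional at `x₀`, so `g (T x₀) = 0`. Hence
`x₀ ± s • T x₀ ∈ B` for small `s`, and extremality of `x₀` forces `T x₀ = 0`.
-/

open Set Filter Topology Metric

section Polyhedron

variable {V ι : Type*} [AddCommGroup V] [Module ℝ V]

def polyhedron (f : ι → V →ₗ[ℝ] ℝ) (c : ι → ℝ) : Set V := {x | ∀ i, f i x ≤ c i}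

theorem eventually_add_smul_mem_polyhedron [Finite ι] {f : ι → V →ₗ[ℝ] ℝ} {c : ι → ℝ} {x v : V}
    (hx : x ∈ polyhedron f c) (hv : ∀ i, f i x = c i → f i v = 0) :
    ∀ᶠ s : ℝ in 𝓝 0, x + s • v ∈ polyhedron f c := by
  simp only [polyhedron, mem_ofPred_eq, eventually_all, map_add, map_smul, smul_eq_mul]
  intro i
  rcases (hx i).eq_or_lt with hactive | hslack
  · exact .of_forall fun s => by simp [hactive, hv i hactive]
  · have hcont : Tendsto (fun s : ℝ => f i x + s * f i v) (𝓝 0) (𝓝 (f i x)) :=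
      (by fun_prop : Continuous fun s : ℝ => f i x + s * f i v).tendsto' 0 _ (by simp)
    exact (hcont.eventually (gt_mem_nhds hslack)).mono fun _ => le_of_lt

theorem eq_zero_of_mem_extremePoints_of_eventually_add_smul_mem {A : Set V} {x v : V}
    (hx : x ∈ A.extremePoints ℝ) (hA : ∀ᶠ s : ℝ in 𝓝 0, x + s • v ∈ A) : v = 0 := by
  have hA' : ∀ᶠ s : ℝ in 𝓝 0, x - s • v ∈ A := by
    simpa [neg_smul, ← sub_eq_add_neg] using
      (continuous_neg.tendsto' (0 : ℝ) 0 neg_zero).eventually hA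
  obtain ⟨s, ⟨hsub, hadd⟩, hs : s ≠ 0⟩ :=
    (((hA'.and hA).filter_mono nhdsWithin_le_nhds).and
      (eventually_mem_nhdsWithin (s := {0}ᶜ))).exists
  have : x - s • v = x := hx.2 hsub hadd (mem_openSegment_sub_add x (s • v))
  simpa [hs] using this

-- An extreme point is determined by the set of constraints active at it.
theorem extremePoints_polyhedron_finite [Finite ι] (f : ι → V →ₗ[ℝ] ℝ) (c : ι → ℝ) :
    ((polyhedron f c).extremePoints ℝ).Finite := by
  refine Finite.of_finite_image (f := fun x => {i | f i x = c i}) (toFinite _)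
    fun x hx y hy hxy => ?_
  have hactive : ∀ i, f i x = c i → f i (y - x) = 0 := fun i hi => by
    have : f i y = c i := (Set.ext_iff.1 hxy i).1 hi
    simp [this, hi]
  exact (sub_eq_zero.1 <| eq_zero_of_mem_extremePoints_of_eventually_add_smul_mem hx
    (eventually_add_smul_mem_polyhedron hx.1 hactive)).symm

end Polyhedron

theorem IsCompact.le_of_forall_extremePoints_le {E : Type*} [AddCommGroup E] [Module ℝ E]
    [TopologicalSpace E] [T2Space E] [IsTopologicalAddGroup E] [ContinuousSMul ℝ E]
    [LocallyConvexSpace ℝ E] {K : Set E} (hK : IsCompact K) (hconv : Convex ℝ K)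
    (φ : E →L[ℝ] ℝ) {c : ℝ} (h : ∀ e ∈ K.extremePoints ℝ, φ e ≤ c) {x : E} (hx : x ∈ K) :
    φ x ≤ c := by
  rw [← closure_convexHull_extremePoints hK hconv] at hx
  exact closure_minimal (convexHull_min h (convex_halfSpace_le φ.isLinear c))
    (isClosed_le φ.continuous continuous_const) hx

section NormedSpace

variable {X : Type*} [NormedAddCommGroup X] [NormedSpace ℝ X]

theorem StrongDual.apply_le_one {φ : StrongDual ℝ X} {z : X} (hφ : ‖φ‖ ≤ 1) (hz : ‖z‖ ≤ 1) :
    φ z ≤ 1 :=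
  (le_abs_self _).trans <| (φ.le_opNorm z).trans <| mul_le_one₀ hφ (norm_nonneg z) hz

theorem StrongDual.norm_eq_one_of_apply_eq_one {φ : StrongDual ℝ X} {z : X} (hφ : ‖φ‖ ≤ 1)
    (hz : ‖z‖ ≤ 1) (h : φ z = 1) : ‖φ‖ = 1 ∧ ‖z‖ = 1 := by
  have : 1 ≤ ‖φ‖ * ‖z‖ := h ▸ (le_abs_self _).trans (φ.le_opNorm z)
  constructor <;> nlinarith [norm_nonneg φ, norm_nonneg z]

variable [FiniteDimensional ℝ X]

theorem closedBall_dual_eq_polyhedron :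
    closedBall (0 : StrongDual ℝ X) 1 =
      polyhedron (fun e : (closedBall (0 : X) 1).extremePoints ℝ =>
        (ContinuousLinearMap.apply ℝ ℝ (e : X) : StrongDual ℝ X →ₗ[ℝ] ℝ)) fun _ => 1 := by
  ext φ
  simp only [polyhedron, mem_closedBall_zero_iff, mem_ofPred_eq, Subtype.forall]
  refine ⟨fun hφ e he => φ.apply_le_one hφ (mem_closedBall_zero_iff.1 he.1), fun h => ?_⟩
  have hball : ∀ z ∈ closedBall (0 : X) 1, φ z ≤ 1 := fun z hz =>
    (isCompact_closedBall 0 1).le_of_forall_extremePoints_le (convex_closedBall 0 1) φ h hz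
  refine ContinuousLinearMap.opNorm_le_of_unit_norm zero_le_one fun z hz => abs_le.2 ⟨?_, ?_⟩
  · linarith [map_neg φ z, hball (-z) (by simp [hz])]
  · exact hball z (by simp [hz])

theorem extremePoints_closedBall_dual_finite
    (hpoly : ((closedBall (0 : X) 1).extremePoints ℝ).Finite) :
    ((closedBall (0 : StrongDual ℝ X) 1).extremePoints ℝ).Finite := by
  have := hpoly.to_subtype
  rw [closedBall_dual_eq_polyhedron]
  exact extremePoints_polyhedron_finite _ _

theorem closedBall_eq_polyhedron_extremePoints_dual :
    closedBall (0 : X) 1 =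
      polyhedron (fun g : (closedBall (0 : StrongDual ℝ X) 1).extremePoints ℝ =>
        ((g : StrongDual ℝ X) : X →ₗ[ℝ] ℝ)) fun _ => 1 := by
  ext z
  simp only [polyhedron, mem_closedBall_zero_iff, mem_ofPred_eq, Subtype.forall]
  refine ⟨fun hz g hg => g.apply_le_one (mem_closedBall_zero_iff.1 hg.1) hz, fun h => ?_⟩
  obtain ⟨g, hg, hgz⟩ := exists_dual_vector'' ℝ z
  rw [← show g z = ‖z‖ by simpa using hgz]
  exact (isCompact_closedBall 0 1).le_of_forall_extremePoints_le (convex_closedBall 0 1)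
    (ContinuousLinearMap.apply ℝ ℝ z) h (mem_closedBall_zero_iff.2 hg)

end NormedSpace

/-- if `x₀` is an extreme point of the unit ball of a finite-dimensional real
polyhedral Banach space and `T` has numerical radius `0` (i.e. `f (T x) = 0` for every
unit vector `x` and support functional `f` at `x`), then `T x₀ = 0`. -/
theorem numerical_radius_zero_kills_extreme_points (X : Type*) [NormedAddCommGroup X]
    [NormedSpace ℝ X] [FiniteDimensional ℝ X]
    (hpoly : (Set.extremePoints ℝ (Metric.closedBall (0 : X) 1)).Finite)
    (x₀ : X) (hx₀ : x₀ ∈ Set.extremePoints ℝ (Metric.closedBall (0 : X) 1))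
    (T : X →L[ℝ] X)
    (h : ∀ (x : X) (f : X →L[ℝ] ℝ), ‖x‖ = 1 → ‖f‖ = 1 → f x = 1 → f (T x) = 0) :
    T x₀ = 0 := by
  have hx₀le : ‖x₀‖ ≤ 1 := mem_closedBall_zero_iff.1 hx₀.1
  have := (extremePoints_closedBall_dual_finite hpoly).to_subtype
  rw [closedBall_eq_polyhedron_extremePoints_dual] at hx₀
  refine eq_zero_of_mem_extremePoints_of_eventually_add_smul_mem hx₀
    (eventually_add_smul_mem_polyhedron hx₀.1 ?_)
  rintro ⟨g, hg⟩ hgx₀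
  obtain ⟨hg1, hx₀1⟩ := g.norm_eq_one_of_apply_eq_one (mem_closedBall_zero_iff.1 hg.1) hx₀le hgx₀
  exact h x₀ g hx₀1 hg1 hgx₀
end

section
/- Let 1 ≤ p < ∞ with p ≠ 2, and let T be a bounded linear operator on real ℓ_p with numerical radius 0, i.e., x*(Tx) = 0 for every unit vector x and every norm-one functional x* with x*(x) = 1. Then T = 0. Hence the numerical radius is a norm on L(ℓ_p). -/
/-!
Write `r = p.toReal` and `t i j = (T eⱼ) i`. By homogeneity the hypothesis gives `f (T x) = 0`
whenever `f x = ‖f‖ * ‖x‖`. The pair `x = eₙ`, `f = eₙ*` gives `t n n = 0`. For `a, b > 0` the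
vector `x = a eₘ + b eₙ` is normed by `f = a^(r-1) eₘ* + b^(r-1) eₙ*` (Hölder), which gives
`a^(r-1) b t m n + b^(r-1) a t n m = 0`; the choices `(a, b) = (1, 1)` and `(2, 1)` force
`(2^(r-1) - 2) t m n = 0`, and `2^(r-1) ≠ 2` as `r ≠ 2`. So `T` kills the basis vectors, whose
span is dense because `r < ∞`.
-/

open scoped ENNReal

def HasNumericalRadiusZero {E : Type*} [NormedAddCommGroup E] [NormedSpace ℝ E]
    (T : E →L[ℝ] E) : Prop :=
  ∀ (x : E) (f : E →L[ℝ] ℝ), ‖x‖ = 1 → ‖f‖ = 1 → f x = 1 → f (T x) = 0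

theorem HasNumericalRadiusZero.apply_apply_eq_zero {E : Type*} [NormedAddCommGroup E]
    [NormedSpace ℝ E] {T : E →L[ℝ] E} (hT : HasNumericalRadiusZero T) {x : E}
    {f : E →L[ℝ] ℝ} (hfx : ‖f‖ * ‖x‖ ≤ f x) : f (T x) = 0 := by
  rcases eq_or_ne x 0 with rfl | hx
  · simp
  rcases eq_or_ne f 0 with rfl | hf
  · simp
  have hfx' : f x = ‖f‖ * ‖x‖ := le_antisymm ((le_abs_self _).trans (f.le_opNorm x)) hfx
  have hx' : ‖x‖ ≠ 0 := norm_ne_zero_iff.mpr hx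
  have hf' : ‖f‖ ≠ 0 := norm_ne_zero_iff.mpr hf
  have key := hT (‖x‖⁻¹ • x) (‖f‖⁻¹ • f) (norm_smul_inv_norm hx) (norm_smul_inv_norm hf)
    (by simp only [smul_apply, map_smul, hfx', smul_eq_mul]; field_simp)
  simpa [hx', hf'] using key

theorem Real.rpow_sub_one_mul_add_le {r a b u v : ℝ} (hr : 1 ≤ r) (ha : 0 < a) (hb : 0 < b)
    (hu : 0 ≤ u) (hv : 0 ≤ v) :
    a ^ (r - 1) * u + b ^ (r - 1) * v ≤ (a ^ r + b ^ r) ^ (1 - r⁻¹) * (u ^ r + v ^ r) ^ r⁻¹ := by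
  have weight {c w : ℝ} (hc : 0 < c) : c ^ r * (w / c) = c ^ (r - 1) * w := by
    rw [Real.rpow_sub_one hc.ne']; field_simp
  have weight_rpow {c w : ℝ} (hc : 0 < c) (hw : 0 ≤ w) : c ^ r * (w / c) ^ r = w ^ r := by
    rw [Real.div_rpow hw hc.le]; field_simp
  have := Real.inner_le_weight_mul_Lp_of_nonneg Finset.univ hr ![a ^ r, b ^ r] ![u / a, v / b]
    (fun i => by fin_cases i <;> simp <;> positivity)
    (fun i => by fin_cases i <;> simp <;> positivity)
  simpa [Fin.sum_univ_two, weight ha, weight hb, weight_rpow ha hu, weight_rpow hb hv] using this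

section

variable {p : ℝ≥0∞}

namespace lp

variable {α : Type*}

theorem single_eq_smul_single_one [DecidableEq α] {𝕜 : Type*} [NormedRing 𝕜] (i : α) (c : 𝕜) :
    lp.single (E := fun _ : α => 𝕜) p i c = c • lp.single p i 1 := by
  rw [← lp.single_smul, smul_eq_mul, mul_one]

theorem abs_rpow_add_abs_rpow_le_norm_rpow (hp : 0 < p.toReal) (y : lp (fun _ : ℕ => ℝ) p) {m n : ℕ}
    (hmn : m ≠ n) : |y m| ^ p.toReal + |y n| ^ p.toReal ≤ ‖y‖ ^ p.toReal := by
  have := sum_le_hasSum {m, n} (fun i _ => by positivity) (hasSum_norm hp y)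
  simpa [Finset.sum_pair hmn] using this

theorem norm_single_add_single (hp : 0 < p.toReal) {m n : ℕ} (hmn : m ≠ n) (a b : ℝ) :
    ‖(lp.single p m a + lp.single p n b : lp (fun _ : ℕ => ℝ) p)‖
      = (|a| ^ p.toReal + |b| ^ p.toReal) ^ p.toReal⁻¹ := by
  have h := lp.norm_sum_single hp (fun i => if i = m then a else b) {m, n}
  simp only [Finset.sum_pair hmn, if_true, if_neg hmn.symm, Real.norm_eq_abs] at h
  rw [← h, Real.rpow_rpow_inv (norm_nonneg' _) hp.ne']

variable [Fact (1 ≤ p)]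

section Eval

variable {E : α → Type*} [∀ i, NormedAddCommGroup (E i)]

@[simp]
theorem evalCLM_apply {𝕜 : Type*} [NormedRing 𝕜] [∀ i, Module 𝕜 (E i)]
    [∀ i, IsBoundedSMul 𝕜 (E i)] (i : α) (f : lp E p) : evalCLM 𝕜 E p i f = f i :=
  rfl

theorem norm_evalCLM_le {𝕜 : Type*} [NontriviallyNormedField 𝕜] [∀ i, NormedSpace 𝕜 (E i)]
    (i : α) : ‖evalCLM 𝕜 E p i‖ ≤ 1 :=
  LinearMap.mkContinuous_norm_le _ zero_le_one _

end Eval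

theorem norm_smul_evalCLM_add_smul_evalCLM_le (hr : 1 ≤ p.toReal) {m n : ℕ} (hmn : m ≠ n)
    {a b : ℝ} (ha : 0 < a) (hb : 0 < b) :
    ‖a ^ (p.toReal - 1) • evalCLM ℝ (fun _ : ℕ => ℝ) p m
        + b ^ (p.toReal - 1) • evalCLM ℝ (fun _ : ℕ => ℝ) p n‖
      ≤ (a ^ p.toReal + b ^ p.toReal) ^ (1 - p.toReal⁻¹) := by
  set r := p.toReal
  refine ContinuousLinearMap.opNorm_le_bound _ (by positivity) fun y => ?_
  calc ‖a ^ (r - 1) * y m + b ^ (r - 1) * y n‖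
      ≤ a ^ (r - 1) * |y m| + b ^ (r - 1) * |y n| := by
        grw [Real.norm_eq_abs, abs_add_le, abs_mul, abs_mul, abs_of_pos (Real.rpow_pos_of_pos ha _),
          abs_of_pos (Real.rpow_pos_of_pos hb _)]
    _ ≤ (a ^ r + b ^ r) ^ (1 - r⁻¹) * (|y m| ^ r + |y n| ^ r) ^ r⁻¹ :=
        Real.rpow_sub_one_mul_add_le hr ha hb (abs_nonneg _) (abs_nonneg _)
    _ ≤ (a ^ r + b ^ r) ^ (1 - r⁻¹) * ‖y‖ := by
        gcongr
        calc (|y m| ^ r + |y n| ^ r) ^ r⁻¹ ≤ (‖y‖ ^ r) ^ r⁻¹ := by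
              gcongr; exact abs_rpow_add_abs_rpow_le_norm_rpow (by linarith) y hmn
          _ = ‖y‖ := Real.rpow_rpow_inv (norm_nonneg _) (by linarith)

end lp

namespace HasNumericalRadiusZero

variable [Fact (1 ≤ p)] {T : lp (fun _ : ℕ => ℝ) p →L[ℝ] lp (fun _ : ℕ => ℝ) p}

theorem lp_apply_single_self (hT : HasNumericalRadiusZero T) (n : ℕ) :
    T (lp.single p n 1) n = 0 := by
  have hp : 0 < p := zero_lt_one.trans_le Fact.out
  simpa using hT.apply_apply_eq_zero (x := lp.single p n 1) (f := lp.evalCLM ℝ _ p n)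
    (by simpa [lp.norm_single hp] using lp.norm_evalCLM_le (𝕜 := ℝ) (p := p) n)

theorem lp_rpow_mul_apply_add_rpow_mul_apply (hT : HasNumericalRadiusZero T)
    (hr : 1 ≤ p.toReal) {m n : ℕ} (hmn : m ≠ n) {a b : ℝ} (ha : 0 < a) (hb : 0 < b) :
    a ^ (p.toReal - 1) * T (lp.single p m a + lp.single p n b) m
      + b ^ (p.toReal - 1) * T (lp.single p m a + lp.single p n b) n = 0 := by
  set r := p.toReal
  have hx : ‖(lp.single p m a + lp.single p n b : lp (fun _ : ℕ => ℝ) p)‖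
      = (a ^ r + b ^ r) ^ r⁻¹ := by
    rw [lp.norm_single_add_single (by linarith) hmn, abs_of_pos ha, abs_of_pos hb]
  have hfx : a ^ (r - 1) * a + b ^ (r - 1) * b = a ^ r + b ^ r := by
    rw [← Real.rpow_add_one ha.ne', ← Real.rpow_add_one hb.ne', sub_add_cancel]
  have key := hT.apply_apply_eq_zero (x := lp.single p m a + lp.single p n b)
    (f := a ^ (r - 1) • lp.evalCLM ℝ _ p m + b ^ (r - 1) • lp.evalCLM ℝ _ p n) ?_
  · simpa using key
  calc _ ≤ (a ^ r + b ^ r) ^ (1 - r⁻¹) * (a ^ r + b ^ r) ^ r⁻¹ := by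
        rw [hx]
        gcongr
        exact lp.norm_smul_evalCLM_add_smul_evalCLM_le hr hmn ha hb
    _ = _ := by
      rw [← Real.rpow_add (by positivity), sub_add_cancel, Real.rpow_one]
      simp [hmn, hmn.symm, hfx]

theorem lp_apply_single_of_ne (hT : HasNumericalRadiusZero T) (hr : 1 ≤ p.toReal)
    (hr2 : p.toReal ≠ 2) {m n : ℕ} (hmn : m ≠ n) : T (lp.single p n 1) m = 0 := by
  set r := p.toReal
  have relation {a b : ℝ} (ha : 0 < a) (hb : 0 < b) :
      a ^ (r - 1) * b * T (lp.single p n 1) m + b ^ (r - 1) * a * T (lp.single p m 1) n = 0 := by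
    have h := hT.lp_rpow_mul_apply_add_rpow_mul_apply hr hmn ha hb
    rw [lp.single_eq_smul_single_one m a, lp.single_eq_smul_single_one n b, map_add,
      map_smul, map_smul] at h
    simp only [lp.coeFn_add, lp.coeFn_smul, Pi.add_apply, Pi.smul_apply, smul_eq_mul,
      hT.lp_apply_single_self] at h
    linear_combination h
  have h11 := relation one_pos one_pos
  have h21 := relation two_pos one_pos
  have h2 : (2 : ℝ) ^ (r - 1) ≠ 2 := by
    conv_rhs => rw [← Real.rpow_one 2]
    rw [Ne, Real.rpow_right_inj two_pos (by norm_num)]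
    contrapose! hr2
    linarith
  simp only [Real.one_rpow, one_mul, mul_one] at h11 h21
  have : ((2 : ℝ) ^ (r - 1) - 2) * T (lp.single p n 1) m = 0 := by
    linear_combination h21 - 2 * h11
  exact (mul_eq_zero.mp this).resolve_left (sub_ne_zero.mpr h2)

end HasNumericalRadiusZero

end

/-- for `1 ≤ p < ∞`, `p ≠ 2`, a bounded linear operator on real `ℓ_p`
with numerical radius `0` (i.e. `f (T x) = 0` for every unit vector `x` and every
norm-one functional `f` with `f x = 1`) is the zero operator; hence the numerical
radius is a norm on `L(ℓ_p)`. -/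
theorem lp_numerical_radius_zero (p : ENNReal) [Fact (1 ≤ p)] (hp2 : p ≠ 2) (hpt : p ≠ ⊤)
    (T : lp (fun _ : ℕ => ℝ) p →L[ℝ] lp (fun _ : ℕ => ℝ) p)
    (h : ∀ (x : lp (fun _ : ℕ => ℝ) p) (f : lp (fun _ : ℕ => ℝ) p →L[ℝ] ℝ),
      ‖x‖ = 1 → ‖f‖ = 1 → f x = 1 → f (T x) = 0) :
    T = 0 := by
  have hT : HasNumericalRadiusZero T := h
  have hr : 1 ≤ p.toReal := ENNReal.toReal_one ▸ ENNReal.toReal_mono hpt Fact.out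
  have hr2 : p.toReal ≠ 2 := fun h2 => hp2 (by rw [← ENNReal.ofReal_toReal hpt, h2]; norm_num)
  have entry (m n : ℕ) : T (lp.single p n 1) m = 0 := by
    rcases eq_or_ne m n with rfl | hmn
    · exact hT.lp_apply_single_self m
    · exact hT.lp_apply_single_of_ne hr hr2 hmn
  refine lp.ext_continuousLinearMap hpt fun n => ContinuousLinearMap.ext fun c => ?_
  ext m
  simp [lp.single_eq_smul_single_one n c, entry]
end

section
/- Let 1 < p < ∞, p ≠ 2, and let T be a bounded linear operator on real ℓ_p whose matrix entries are a_{kj} = e_k^*(T e_j). If x*(Tx) = 0 for all unit vectors x with support functional x*, then for all r ≠ s: the relation αβ(a_{rs}|α|^{p−2} + a_{sr}|β|^{p−2}) = 0 for all nonzero real α, β forces a_{rs} = a_{sr} = 0. -/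
/-- the key algebraic step. For real numbers `a = a_{rs}`, `b = a_{sr}` and
`1 < p < ∞`, `p ≠ 2`: if `α * β * (a * |α| ^ (p - 2) + b * |β| ^ (p - 2)) = 0` for all
nonzero real `α, β`, then `a = 0` and `b = 0`. -/
theorem offdiagonal_entries_vanish (p : ℝ) (hp1 : 1 < p) (hp2 : p ≠ 2) (a b : ℝ)
    (h : ∀ α β : ℝ, α ≠ 0 → β ≠ 0 →
      α * β * (a * |α| ^ (p - 2) + b * |β| ^ (p - 2)) = 0) :
    a = 0 ∧ b = 0 := by
  have h1 := h 1 1 one_ne_zero one_ne_zero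
  have h2 := h 2 1 two_ne_zero one_ne_zero
  simp only [abs_one, Real.one_rpow, mul_one, one_mul] at h1 h2
  have hab : a + b = 0 := h1
  rw [show |(2:ℝ)| = 2 by norm_num] at h2
  have h2' : a * (2:ℝ) ^ (p - 2) + b = 0 := by linarith
  have hne : (2:ℝ) ^ (p - 2) ≠ 1 := by
    intro hc
    have hl : (p - 2) * Real.log 2 = 0 := by
      rw [← Real.log_rpow (by norm_num : (0:ℝ) < 2), hc, Real.log_one]
    have : p - 2 = 0 := by
      rcases mul_eq_zero.mp hl with h | h
      · exact h
      · exact absurd h (ne_of_gt (Real.log_pos (by norm_num)))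
    exact hp2 (by linarith)
  have ha : a = 0 := by
    have : a * ((2:ℝ) ^ (p - 2) - 1) = 0 := by linarith
    rcases mul_eq_zero.mp this with h | h
    · exact h
    · exact absurd (by linarith : (2:ℝ) ^ (p - 2) = 1) hne
  exact ⟨ha, by linarith⟩
end

section
/- Let X be a finite-dimensional Banach space and T, A nonzero bounded linear operators on X. Then T ⊥_B^w A (i.e., ‖T + λA‖_w ≥ ‖T‖_w for all scalars λ) if and only if 0 belongs to the convex hull of D = { conj(x*(Tx)) · x*(Ax) : (x, x*) ∈ M_{W(T)} }. -/
/-- The numerical radius attainment set of `T`. -/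
noncomputable def MW {𝕜 X : Type*} [RCLike 𝕜] [NormedAddCommGroup X] [NormedSpace 𝕜 X]
    (T : X →L[𝕜] X) : Set (X × (X →L[𝕜] 𝕜)) :=
  {p | ‖p.1‖ = 1 ∧ ‖p.2‖ = 1 ∧ p.2 p.1 = 1 ∧ ‖p.2 (T p.1)‖ = nrad T}

/-!
For a pair `p = (x, x*)` write `a = x*(Tx)` and `b = x*(Ax)`. Since
`|a + λb|² = |a|² + 2 Re (λ conj(a) b) + |λ b|²`, a pair of `M_{W(T)}` with
`Re (λ conj(a) b) ≥ 0` already witnesses `w(T) ≤ w(T + λA)`. By separation from the compact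
convex set `conv D`, `0 ∈ conv D` says precisely that such a pair exists for every `λ`.
Conversely, if `w(T) ≤ w(T + tμA)` for all `t > 0`, choose pairs attaining `w(T + tμA)`: as
`t → 0` a limit point of them lies in `M_{W(T)}` and satisfies `Re (μ conj(a) b) ≥ 0`.
-/

open Filter Topology RCLike ComplexConjugate

theorem IsCompact.convexHull {E : Type*} [NormedAddCommGroup E] [NormedSpace ℝ E]
    [FiniteDimensional ℝ E] {s : Set E} (hs : IsCompact s) : IsCompact (convexHull ℝ s) := by
  let K : ℕ → Set E := fun k => (fun q : (Fin k → ℝ) × (Fin k → E) => ∑ i, q.1 i • q.2 i) ''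
    (stdSimplex ℝ (Fin k) ×ˢ Set.univ.pi fun _ => s)
  have hK : ∀ k, IsCompact (K k) := fun k =>
    ((isCompact_stdSimplex ℝ (Fin k)).prod (isCompact_univ_pi fun _ => hs)).image (by fun_prop)
  have hK_subset : ∀ k, K k ⊆ _root_.convexHull ℝ s := by
    rintro k _ ⟨⟨w, z⟩, ⟨hw, hz⟩, rfl⟩
    exact (convex_convexHull ℝ s).sum_mem (fun i _ => hw.1 i) hw.2
      fun i _ => subset_convexHull ℝ s (hz i trivial)
  have hsubset_K : _root_.convexHull ℝ s ⊆ ⋃ k ∈ Finset.range (Module.finrank ℝ E + 2), K k := by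
    intro x hx
    -- Carathéodory: `x` is a convex combination of affinely independent points of `s`
    obtain ⟨ι, _, z, w, hzs, hind, hw0, hw1, rfl⟩ := eq_pos_convex_span_of_mem_convexHull hx
    let e := Fintype.equivFin ι
    have hcard : Fintype.card ι < Module.finrank ℝ E + 2 :=
      Nat.lt_succ_of_le <|
        hind.card_le_finrank_succ.trans (Nat.succ_le_succ (Submodule.finrank_le _))
    refine Set.mem_biUnion (Finset.mem_range.2 hcard)
      ⟨(w ∘ e.symm, z ∘ e.symm), ⟨⟨fun i => (hw0 _).le, ?_⟩, fun i _ => hzs ⟨_, rfl⟩⟩, ?_⟩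
    · simpa [← hw1] using e.symm.sum_comp w
    · exact e.symm.sum_comp fun i => w i • z i
  rw [Set.Subset.antisymm hsubset_K (Set.iUnion₂_subset fun k _ => hK_subset k)]
  exact (Finset.range _).isCompact_biUnion fun k _ => hK k

theorem zero_mem_convexHull_iff_forall_exists_re_mul_nonneg {𝕜 : Type*} [RCLike 𝕜]
    {D : Set 𝕜} (hD : IsCompact D) :
    (0 : 𝕜) ∈ convexHull ℝ D ↔ ∀ μ : 𝕜, ∃ d ∈ D, 0 ≤ re (μ * d) := by
  constructor
  · intro h0 μ
    have hconv : ConvexOn ℝ Set.univ fun z : 𝕜 => re (μ * z) :=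
      (reLm.comp (LinearMap.mulLeft ℝ μ)).convexOn convex_univ
    simpa using hconv.exists_ge_of_mem_convexHull (Set.subset_univ D) h0
  · intro h
    by_contra h0
    obtain ⟨f, u, hf, hu⟩ := RCLike.geometric_hahn_banach_closed_point (𝕜 := 𝕜)
      (convex_convexHull ℝ D) hD.convexHull.isClosed h0
    obtain ⟨d, hd, hd0⟩ := h (f 1)
    have hfd : f d = f 1 * d := by simpa [mul_comm] using f.map_smul d 1
    have hd_lt : re (f 1 * d) < u := hfd ▸ hf d (subset_convexHull ℝ D hd)
    rw [map_zero, map_zero] at hu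
    linarith

theorem norm_add_sq_eq {𝕜 : Type*} [RCLike 𝕜] (a b : 𝕜) :
    ‖a + b‖ ^ 2 = ‖a‖ ^ 2 + 2 * re (conj a * b) + ‖b‖ ^ 2 := by
  rw [norm_add_sq (𝕜 := 𝕜), inner_apply, mul_comm b]

theorem norm_le_norm_add_of_re_conj_mul_nonneg {𝕜 : Type*} [RCLike 𝕜] {a b : 𝕜}
    (h : 0 ≤ re (conj a * b)) : ‖a‖ ≤ ‖a + b‖ := by
  rw [← pow_le_pow_iff_left₀ (norm_nonneg _) (norm_nonneg _) two_ne_zero, norm_add_sq_eq]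
  nlinarith [sq_nonneg ‖b‖]

theorem two_mul_re_conj_mul_add_nonneg_of_norm_le {𝕜 : Type*} [RCLike 𝕜] {a b : 𝕜}
    {t : ℝ} (ht : 0 < t) (h : ‖a‖ ≤ ‖a + t * b‖) : 0 ≤ 2 * re (conj a * b) + t * ‖b‖ ^ 2 := by
  rw [← pow_le_pow_iff_left₀ (norm_nonneg _) (norm_nonneg _) two_ne_zero, norm_add_sq_eq,
    mul_left_comm, re_ofReal_mul, norm_mul, norm_ofReal, abs_of_pos ht] at h
  refine (mul_nonneg_iff_of_pos_left ht).1 ?_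
  nlinarith

section NumericalRadius

variable {𝕜 X : Type*} [RCLike 𝕜] [NormedAddCommGroup X] [NormedSpace 𝕜 X]

variable (𝕜 X) in
def unitPairs : Set (X × (X →L[𝕜] 𝕜)) := {p | ‖p.1‖ = 1 ∧ ‖p.2‖ = 1 ∧ p.2 p.1 = 1}

theorem mem_MW_iff {T : X →L[𝕜] X} {p : X × (X →L[𝕜] 𝕜)} :
    p ∈ MW T ↔ p ∈ unitPairs 𝕜 X ∧ ‖p.2 (T p.1)‖ = nrad T := by
  simp only [MW, unitPairs, Set.mem_ofPred_eq, and_assoc]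

theorem continuous_snd_apply_fst (T : X →L[𝕜] X) :
    Continuous fun p : X × (X →L[𝕜] 𝕜) => p.2 (T p.1) := by
  fun_prop

theorem norm_apply_apply_le {p : X × (X →L[𝕜] 𝕜)} (hp : p ∈ unitPairs 𝕜 X) (T : X →L[𝕜] X) :
    ‖p.2 (T p.1)‖ ≤ ‖T‖ := by
  simpa [hp.1, hp.2.1] using p.2.le_opNorm_of_le (T.le_opNorm p.1)

theorem nrad_eq_sSup_image (T : X →L[𝕜] X) :
    nrad T = sSup ((fun p : X × (X →L[𝕜] 𝕜) => ‖p.2 (T p.1)‖) '' unitPairs 𝕜 X) := by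
  simp [nrad, unitPairs, Set.image, and_assoc, eq_comm]

theorem norm_apply_apply_le_nrad {p : X × (X →L[𝕜] 𝕜)} (hp : p ∈ unitPairs 𝕜 X)
    (T : X →L[𝕜] X) : ‖p.2 (T p.1)‖ ≤ nrad T := by
  rw [nrad_eq_sSup_image]
  exact le_csSup ⟨‖T‖, Set.forall_mem_image.2 fun q hq => norm_apply_apply_le hq T⟩
    (Set.mem_image_of_mem _ hp)

theorem nrad_le_nrad_add {T S : X →L[𝕜] X} {p : X × (X →L[𝕜] 𝕜)} (hp : p ∈ MW T)
    (h : 0 ≤ re (conj (p.2 (T p.1)) * p.2 (S p.1))) : nrad T ≤ nrad (T + S) :=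
  calc nrad T = ‖p.2 (T p.1)‖ := (mem_MW_iff.1 hp).2.symm
    _ ≤ ‖p.2 (T p.1) + p.2 (S p.1)‖ := norm_le_norm_add_of_re_conj_mul_nonneg h
    _ = ‖p.2 ((T + S) p.1)‖ := by simp
    _ ≤ nrad (T + S) := norm_apply_apply_le_nrad (mem_MW_iff.1 hp).1 _

theorem nrad_add_le_norm_apply_apply_add {T S : X →L[𝕜] X} {p : X × (X →L[𝕜] 𝕜)}
    (hp : p ∈ MW (T + S)) : nrad (T + S) ≤ ‖p.2 (T p.1)‖ + ‖S‖ :=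
  calc nrad (T + S) = ‖p.2 (T p.1) + p.2 (S p.1)‖ := by simp [← (mem_MW_iff.1 hp).2]
    _ ≤ ‖p.2 (T p.1)‖ + ‖S‖ := by
      grw [norm_add_le, norm_apply_apply_le (mem_MW_iff.1 hp).1 S]

theorem unitPairs_nonempty [Nontrivial X] : (unitPairs 𝕜 X).Nonempty := by
  obtain ⟨x, hx⟩ := exists_ne (0 : X)
  have hy : ‖(‖x‖⁻¹ : 𝕜) • x‖ = 1 := norm_smul_inv_norm hx
  obtain ⟨f, hf, hfy⟩ := exists_dual_vector 𝕜 ((‖x‖⁻¹ : 𝕜) • x)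
    (by intro h; simp [h] at hy)
  exact ⟨(_, f), hy, hf, by simp [hfy, hy]⟩

section FiniteDimensional

variable [FiniteDimensional 𝕜 X]

theorem isCompact_unitPairs : IsCompact (unitPairs 𝕜 X) := by
  have : ProperSpace (X × (X →L[𝕜] 𝕜)) := FiniteDimensional.proper_rclike 𝕜 _
  refine Metric.isCompact_of_isClosed_isBounded ?_ (isBounded_iff_forall_norm_le.2 ⟨1, ?_⟩)
  · simp only [unitPairs, Set.ofPred_and]
    refine IsClosed.inter ?_ (IsClosed.inter ?_ ?_) <;>
      exact isClosed_eq (by fun_prop) (by fun_prop)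
  · rintro p ⟨h1, h2, -⟩
    simp [Prod.norm_def, h1, h2]

theorem isCompact_MW (T : X →L[𝕜] X) : IsCompact (MW T) := by
  have : MW T = unitPairs 𝕜 X ∩ {p | ‖p.2 (T p.1)‖ = nrad T} := Set.ext fun _ => mem_MW_iff
  rw [this]
  exact isCompact_unitPairs.inter_right (isClosed_eq (by fun_prop) continuous_const)

variable [Nontrivial X]

theorem MW_nonempty (T : X →L[𝕜] X) : (MW T).Nonempty := by
  obtain ⟨p, hp, hpT⟩ := (isCompact_unitPairs.image (continuous_snd_apply_fst T).norm).sSup_mem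
    (unitPairs_nonempty.image _)
  exact ⟨p, mem_MW_iff.2 ⟨hp, hpT.trans (nrad_eq_sSup_image T).symm⟩⟩

theorem exists_mem_MW_re_conj_mul_nonneg (T A : X →L[𝕜] X)
    (h : ∀ t : ℝ, 0 < t → nrad T ≤ nrad (T + (t : 𝕜) • A)) :
    ∃ p ∈ MW T, 0 ≤ re (conj (p.2 (T p.1)) * p.2 (A p.1)) := by
  let t : ℕ → ℝ := fun k => 1 / (k + 1)
  have ht : ∀ k, 0 < t k := fun k => Nat.one_div_pos_of_nat
  choose p hp using fun k => MW_nonempty (T + (t k : 𝕜) • A)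
  have hpP : ∀ k, p k ∈ unitPairs 𝕜 X := fun k => (mem_MW_iff.1 (hp k)).1
  obtain ⟨q, hq, φ, hφ, hpq⟩ := isCompact_unitPairs.tendsto_subseq hpP
  have htφ : Tendsto (t ∘ φ) atTop (𝓝 0) :=
    tendsto_one_div_add_atTop_nhds_zero_nat.comp hφ.tendsto_atTop
  have hqMW : q ∈ MW T := by
    have hlow : ∀ k, nrad T - t k * ‖A‖ ≤ ‖(p k).2 (T (p k).1)‖ := fun k => by
      have hbound := (h (t k) (ht k)).trans (nrad_add_le_norm_apply_apply_add (hp k))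
      rw [norm_smul, norm_ofReal, abs_of_pos (ht k)] at hbound
      linarith
    refine mem_MW_iff.2 ⟨hq, le_antisymm (norm_apply_apply_le_nrad hq T) ?_⟩
    refine le_of_tendsto_of_tendsto' ?_ (((continuous_snd_apply_fst T).norm.tendsto q).comp hpq)
      fun k => hlow (φ k)
    simpa using (htφ.mul_const ‖A‖).const_sub (nrad T)
  refine ⟨q, hqMW, ?_⟩
  let g : X × (X →L[𝕜] 𝕜) → ℝ := fun p => 2 * re (conj (p.2 (T p.1)) * p.2 (A p.1))
  have hg : Continuous g := continuous_const.mul <|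
    continuous_re.comp ((continuous_snd_apply_fst T).star.mul (continuous_snd_apply_fst A))
  have hkey : ∀ k, 0 ≤ g (p k) + t k * ‖A‖ ^ 2 := fun k => by
    have hperturb : ‖(p k).2 (T (p k).1)‖ ≤ ‖(p k).2 (T (p k).1) + t k * (p k).2 (A (p k).1)‖ := by
      simpa [← (mem_MW_iff.1 (hp k)).2] using
        (norm_apply_apply_le_nrad (hpP k) T).trans (h (t k) (ht k))
    refine (two_mul_re_conj_mul_add_nonneg_of_norm_le (ht k) hperturb).trans ?_
    gcongr
    exact norm_apply_apply_le (hpP k) A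
  have hlim : Tendsto (fun k => g (p (φ k)) + t (φ k) * ‖A‖ ^ 2) atTop (𝓝 (g q + 0 * ‖A‖ ^ 2)) :=
    ((hg.tendsto q).comp hpq).add (htφ.mul_const _)
  have hlim_nonneg := ge_of_tendsto' hlim fun k => hkey (φ k)
  simp only [g] at hlim_nonneg
  linarith

end FiniteDimensional

end NumericalRadius

theorem nu_orthogonality_iff_general (𝕜 X : Type*) [RCLike 𝕜] [NormedAddCommGroup X]
    [NormedSpace 𝕜 X] [FiniteDimensional 𝕜 X]
    (T A : X →L[𝕜] X) (hT : T ≠ 0) :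
    (∀ lam : 𝕜, nrad T ≤ nrad (T + lam • A)) ↔
      (0 : 𝕜) ∈ convexHull ℝ
        {d : 𝕜 | ∃ p ∈ MW T, d = (starRingEnd 𝕜) (p.2 (T p.1)) * p.2 (A p.1)} := by
  have : Nontrivial X :=
    (subsingleton_or_nontrivial X).resolve_left fun _ => hT (Subsingleton.elim _ _)
  have hD : IsCompact {d : 𝕜 | ∃ p ∈ MW T, d = conj (p.2 (T p.1)) * p.2 (A p.1)} := by
    simpa only [Set.image, eq_comm] using (isCompact_MW T).image
      (f := fun p => conj (p.2 (T p.1)) * p.2 (A p.1))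
      ((continuous_snd_apply_fst T).star.mul (continuous_snd_apply_fst A))
  simp only [zero_mem_convexHull_iff_forall_exists_re_mul_nonneg hD, Set.mem_ofPred_eq]
  constructor
  · intro h μ
    obtain ⟨p, hp, hre⟩ := exists_mem_MW_re_conj_mul_nonneg T (μ • A) fun t _ => by
      simpa [smul_smul] using h (t * μ)
    exact ⟨_, ⟨p, hp, rfl⟩, by simpa [mul_left_comm] using hre⟩
  · rintro h lam
    obtain ⟨_, ⟨p, hp, rfl⟩, hre⟩ := h lam
    exact nrad_le_nrad_add hp (by simpa [mul_left_comm] using hre)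

/-- `T ⊥_B^w A` iff `0` lies in the convex hull of
`D = { conj(x*(Tx)) · x*(Ax) : (x, x*) ∈ M_{W(T)} }`. -/
theorem nu_orthogonality_iff (𝕜 X : Type*) [RCLike 𝕜] [NormedAddCommGroup X]
    [NormedSpace 𝕜 X] [FiniteDimensional 𝕜 X]
    (T A : X →L[𝕜] X) (hT : T ≠ 0) (hA : A ≠ 0) :
    (∀ lam : 𝕜, nrad T ≤ nrad (T + lam • A)) ↔
      (0 : 𝕜) ∈ convexHull ℝ
        {d : 𝕜 | ∃ p ∈ MW T, d = (starRingEnd 𝕜) (p.2 (T p.1)) * p.2 (A p.1)} :=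
  nu_orthogonality_iff_general 𝕜 X T A hT
end

section
/- Let X be a finite-dimensional Banach space, T, A nonzero operators, and suppose M_{W(T)} = { (μx₀, conj(μ)x₀*) : |μ| = 1 } for a fixed pair (x₀, x₀*) with x₀*(x₀) = 1 = ‖x₀‖ = ‖x₀*‖. Then T ⊥_B^w A if and only if x₀*(A x₀) = 0. -/
/-!
If `x₀*(A x₀) = 0`, the pair `(x₀, x₀*)` itself shows `w(T + λA) ≥ |x₀*(T x₀)| = w(T)`.
Conversely, let `a = x₀*(T x₀)`, `c = x₀*(A x₀) ≠ 0` and perturb along `λ = -t a c̄`, `t ↓ 0`.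
Norming pairs at which `w(T + λA)` is attained accumulate, by compactness, at points of
`M_{W(T)}`, i.e. on the circle through `(x₀, x₀*)`, where `x*(Tx) = a` and `x*(Ax) = c`.
Expanding `w(T)² ≤ |x*(Tx) + λ x*(Ax)|²` against `|x*(Tx)|² ≤ w(T)²` and dividing by `t` gives
`-2|a|²|c|² ≥ 0` in the limit, absurd since `|a| = w(T) > 0`. Here `w(T) > 0` because otherwise
every norming pair lies in `M_{W(T)}`, which forces `X = 𝕜 x₀` and then `T = 0`.
-/

open Filter Topology ComplexConjugate

namespace RCLike

variable {𝕜 : Type*} [RCLike 𝕜]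

lemma two_mul_re_conj_mul_add_mul_sq_nonneg {u w : 𝕜} {ν t : ℝ}
    (ht : 0 < t) (hu : ‖u‖ ≤ ν) (hν : ν ≤ ‖u + t * w‖) :
    0 ≤ 2 * re (conj u * w) + t * ‖w‖ ^ 2 := by
  have hexp : ‖u + t * w‖ ^ 2 = ‖u‖ ^ 2 + t * (2 * re (conj u * w) + t * ‖w‖ ^ 2) := by
    rw [@norm_add_sq 𝕜, inner_apply', mul_left_comm, re_ofReal_mul, norm_mul,
      norm_ofReal, abs_of_pos ht]
    ring
  have hsq : ‖u‖ ^ 2 ≤ ‖u + t * w‖ ^ 2 := pow_le_pow_left₀ (norm_nonneg u) (hu.trans hν) 2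
  nlinarith

lemma re_conj_mul_neg_mul_conj_mul (a c : 𝕜) :
    re (conj a * (-(a * conj c) * c)) = -(‖a‖ * ‖c‖) ^ 2 := by
  rw [show conj a * (-(a * conj c) * c) = -((conj a * a) * (conj c * c)) by ring,
    conj_mul, conj_mul, ← ofReal_pow, ← ofReal_pow, ← ofReal_mul, ← ofReal_neg, ofReal_re]
  ring

end RCLike

section NumericalRadius

open RCLike

variable {𝕜 X : Type*} [RCLike 𝕜] [NormedAddCommGroup X] [NormedSpace 𝕜 X]

variable (𝕜 X) in
def normingPairs : Set (X × (X →L[𝕜] 𝕜)) :=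
  {p | ‖p.1‖ = 1 ∧ ‖p.2‖ = 1 ∧ p.2 p.1 = 1}

lemma norm_apply_apply_le_opNorm (S : X →L[𝕜] X) {p : X × (X →L[𝕜] 𝕜)}
    (hp : p ∈ normingPairs 𝕜 X) : ‖p.2 (S p.1)‖ ≤ ‖S‖ :=
  calc ‖p.2 (S p.1)‖ ≤ ‖p.2‖ * (‖S‖ * ‖p.1‖) := p.2.le_of_opNorm_le_of_le le_rfl (S.le_opNorm _)
    _ = ‖S‖ := by rw [hp.1, hp.2.1, one_mul, mul_one]

lemma le_nrad (S : X →L[𝕜] X) {p : X × (X →L[𝕜] 𝕜)} (hp : p ∈ normingPairs 𝕜 X) :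
    ‖p.2 (S p.1)‖ ≤ nrad S :=
  le_csSup ⟨‖S‖, by
      rintro r ⟨x, f, hx, hf, hfx, rfl⟩
      exact norm_apply_apply_le_opNorm S (p := (x, f)) ⟨hx, hf, hfx⟩⟩
    ⟨p.1, p.2, hp.1, hp.2.1, hp.2.2, rfl⟩

lemma MW_subset_normingPairs (T : X →L[𝕜] X) : MW T ⊆ normingPairs 𝕜 X :=
  fun _ hp => ⟨hp.1, hp.2.1, hp.2.2.1⟩

lemma isClosed_normingPairs : IsClosed (normingPairs 𝕜 X) :=
  (isClosed_eq continuous_fst.norm continuous_const).inter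
    ((isClosed_eq continuous_snd.norm continuous_const).inter
      (isClosed_eq (continuous_snd.clm_apply continuous_fst) continuous_const))

lemma mem_MW_of_tendsto {ι : Type*} {l : Filter ι} [l.NeBot] {T : X →L[𝕜] X}
    {S : ι → X →L[𝕜] X} {p : ι → X × (X →L[𝕜] 𝕜)} {q : X × (X →L[𝕜] 𝕜)}
    (hS : Tendsto S l (𝓝 T)) (hpq : Tendsto p l (𝓝 q)) (hp : ∀ i, p i ∈ normingPairs 𝕜 X)
    (hle : ∀ i, nrad T ≤ ‖(p i).2 (S i (p i).1)‖) : q ∈ MW T := by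
  have hq : q ∈ normingPairs 𝕜 X :=
    isClosed_normingPairs.mem_of_tendsto hpq (Eventually.of_forall hp)
  have hlim : Tendsto (fun i => (p i).2 (S i (p i).1)) l (𝓝 (q.2 (T q.1))) :=
    have hF : Continuous fun z : (X →L[𝕜] X) × (X × (X →L[𝕜] 𝕜)) => z.2.2 (z.1 z.2.1) :=
      (continuous_snd.comp continuous_snd).clm_apply
        (continuous_fst.clm_apply (continuous_fst.comp continuous_snd))
    (hF.tendsto (T, q)).comp (hS.prodMk_nhds hpq)
  exact ⟨hq.1, hq.2.1, hq.2.2,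
    le_antisymm (le_nrad T hq) (ge_of_tendsto' hlim.norm hle)⟩

lemma nrad_le_nrad_add_smul_of_apply_eq_zero {T A : X →L[𝕜] X} {x₀ : X} {f₀ : X →L[𝕜] 𝕜}
    (hMW₀ : (x₀, f₀) ∈ MW T) (hc : f₀ (A x₀) = 0) (lam : 𝕜) : nrad T ≤ nrad (T + lam • A) :=
  calc nrad T = ‖f₀ (T x₀)‖ := hMW₀.2.2.2.symm
    _ = ‖f₀ ((T + lam • A) x₀)‖ := by simp [hc]
    _ ≤ nrad (T + lam • A) := le_nrad _ (MW_subset_normingPairs T hMW₀)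

lemma conj_smul_apply_smul (S : X →L[𝕜] X) (x : X) (f : X →L[𝕜] 𝕜) {μ : 𝕜} (hμ : ‖μ‖ = 1) :
    (conj μ • f) (S (μ • x)) = f (S x) := by
  rw [smul_apply, map_smul, map_smul, smul_smul, RCLike.conj_mul, hμ]
  simp

def unimodularOrbit (x₀ : X) (f₀ : X →L[𝕜] 𝕜) : Set (X × (X →L[𝕜] 𝕜)) :=
  {p | ∃ μ : 𝕜, ‖μ‖ = 1 ∧ p = (μ • x₀, conj μ • f₀)}

lemma exists_smul_eq_of_normingPairs_subset {x₀ : X} {f₀ : X →L[𝕜] 𝕜}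
    (h : normingPairs 𝕜 X ⊆ unimodularOrbit x₀ f₀) (y : X) : ∃ s : 𝕜, s • x₀ = y := by
  rcases eq_or_ne y 0 with rfl | hy
  · exact ⟨0, zero_smul _ _⟩
  have hny : ‖y‖ ≠ 0 := norm_ne_zero_iff.mpr hy
  obtain ⟨g, hg, hgy⟩ := exists_dual_vector 𝕜 y hny
  have hr : ((‖y‖ : ℝ) : 𝕜) ≠ 0 := ofReal_ne_zero.mpr hny
  have hmem : ((‖y‖ : 𝕜)⁻¹ • y, g) ∈ normingPairs 𝕜 X := by
    refine ⟨?_, hg, ?_⟩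
    · rw [norm_smul, norm_inv, norm_ofReal, abs_norm, inv_mul_cancel₀ hny]
    · rw [map_smul, hgy, smul_eq_mul, inv_mul_cancel₀ hr]
  obtain ⟨μ, -, hμ⟩ := h hmem
  refine ⟨(‖y‖ : 𝕜) * μ, ?_⟩
  rw [mul_smul, ← (Prod.mk.inj hμ).1, smul_inv_smul₀ hr]

lemma nrad_pos_of_MW_subset {T : X →L[𝕜] X} (hT : T ≠ 0) {x₀ : X} {f₀ : X →L[𝕜] 𝕜}
    (hK₀ : (x₀, f₀) ∈ normingPairs 𝕜 X) (hM : MW T ⊆ unimodularOrbit x₀ f₀) : 0 < nrad T := by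
  refine ((norm_nonneg _).trans (le_nrad T hK₀)).lt_of_ne' fun h0 => hT ?_
  have hvanish : ∀ p ∈ normingPairs 𝕜 X, p.2 (T p.1) = 0 := fun p hp =>
    norm_le_zero_iff.mp (h0 ▸ le_nrad T hp)
  have hline := exists_smul_eq_of_normingPairs_subset fun p hp =>
    hM ⟨hp.1, hp.2.1, hp.2.2, by rw [hvanish p hp, h0, norm_zero]⟩
  have hTx₀ : T x₀ = 0 := by
    obtain ⟨s, hs⟩ := hline (T x₀)
    have hs0 : s = 0 := by simpa [← hs, hK₀.2.2] using hvanish _ hK₀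
    rw [← hs, hs0, zero_smul]
  ext y
  obtain ⟨s, rfl⟩ := hline y
  simp [hTx₀]

variable [FiniteDimensional 𝕜 X]

lemma isCompact_normingPairs : IsCompact (normingPairs 𝕜 X) := by
  have : ProperSpace X := FiniteDimensional.proper 𝕜 X
  have : ProperSpace (X →L[𝕜] 𝕜) := FiniteDimensional.proper 𝕜 _
  refine Metric.isCompact_of_isClosed_isBounded isClosed_normingPairs ?_
  refine (Metric.isBounded_closedBall (x := 0) (r := 1)).subset fun p hp => ?_
  rw [mem_closedBall_zero_iff, Prod.norm_def, hp.1, hp.2.1, max_self]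

lemma exists_nrad_eq (S : X →L[𝕜] X) (hne : (normingPairs 𝕜 X).Nonempty) :
    ∃ p ∈ normingPairs 𝕜 X, nrad S = ‖p.2 (S p.1)‖ := by
  obtain ⟨p, hp, hmax⟩ := isCompact_normingPairs.exists_isMaxOn hne
    (continuous_snd.clm_apply (S.continuous.comp continuous_fst)).norm.continuousOn
  refine ⟨p, hp, le_antisymm (csSup_le ⟨_, p.1, p.2, hp.1, hp.2.1, hp.2.2, rfl⟩ ?_) (le_nrad S hp)⟩
  rintro r ⟨x, f, hx, hf, hfx, rfl⟩
  exact hmax (a := (x, f)) ⟨hx, hf, hfx⟩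

theorem apply_eq_zero_of_forall_nrad_le_nrad_add_smul {T A : X →L[𝕜] X} {x₀ : X}
    {f₀ : X →L[𝕜] 𝕜} (hMW₀ : (x₀, f₀) ∈ MW T) (hM : MW T ⊆ unimodularOrbit x₀ f₀)
    (hν : 0 < nrad T) (horth : ∀ lam : 𝕜, nrad T ≤ nrad (T + lam • A)) : f₀ (A x₀) = 0 := by
  by_contra hc
  set a := f₀ (T x₀)
  set c := f₀ (A x₀)
  set β : 𝕜 := -(a * conj c)
  set t : ℕ → ℝ := fun n => 1 / (n + 1)
  have ht : ∀ n, 0 < t n := fun n => Nat.one_div_pos_of_nat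
  choose p hpK hpmax using fun n =>
    exists_nrad_eq (T + ((t n : 𝕜) * β) • A) ⟨_, MW_subset_normingPairs T hMW₀⟩
  have hle : ∀ n, nrad T ≤ ‖(p n).2 ((T + ((t n : 𝕜) * β) • A) (p n).1)‖ := fun n =>
    hpmax n ▸ horth _
  set F : ℝ × (X × (X →L[𝕜] 𝕜)) → ℝ := fun z =>
    2 * re (conj (z.2.2 (T z.2.1)) * (β * z.2.2 (A z.2.1))) + z.1 * ‖β * z.2.2 (A z.2.1)‖ ^ 2
  have hF : Continuous F := by
    have := continuous_conj (K := 𝕜)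
    simp only [F]
    fun_prop
  have hFnonneg : ∀ n, 0 ≤ F (t n, p n) := fun n =>
    two_mul_re_conj_mul_add_mul_sq_nonneg (ht n) (le_nrad T (hpK n))
      (by simpa [mul_assoc] using hle n)
  obtain ⟨q, -, φ, hφ, hpq⟩ := isCompact_normingPairs.tendsto_subseq hpK
  have ht0 : Tendsto (t ∘ φ) atTop (𝓝 0) :=
    tendsto_one_div_add_atTop_nhds_zero_nat.comp hφ.tendsto_atTop
  have hS : Tendsto (fun k => T + ((t (φ k) : 𝕜) * β) • A) atTop (𝓝 T) := by
    simpa using (((continuous_ofReal.tendsto 0).comp ht0).mul_const β).smul_const A |>.const_add T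
  obtain ⟨μ, hμ, rfl⟩ := hM (mem_MW_of_tendsto hS hpq (fun k => hpK _) fun k => hle _)
  have hlim := (hF.tendsto _).comp (ht0.prodMk_nhds hpq)
  have hFq : F (0, (μ • x₀, conj μ • f₀)) = 2 * -(‖a‖ * ‖c‖) ^ 2 := by
    simp only [F, conj_smul_apply_smul _ _ _ hμ, zero_mul, add_zero]
    exact congrArg (2 * ·) (re_conj_mul_neg_mul_conj_mul a c)
  have hac : 0 < ‖a‖ * ‖c‖ := mul_pos (hMW₀.2.2.2 ▸ hν) (norm_pos_iff.mpr hc)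
  have := ge_of_tendsto' hlim fun k => hFnonneg (φ k)
  nlinarith

end NumericalRadius

theorem nu_orthogonality_single_attainment_general (𝕜 X : Type*) [RCLike 𝕜] [NormedAddCommGroup X]
    [NormedSpace 𝕜 X] [FiniteDimensional 𝕜 X]
    (T A : X →L[𝕜] X) (hT : T ≠ 0)
    (x₀ : X) (f₀ : X →L[𝕜] 𝕜)
    (hM : MW T = {p | ∃ μ : 𝕜, ‖μ‖ = 1 ∧ p = (μ • x₀, (starRingEnd 𝕜) μ • f₀)}) :
    (∀ lam : 𝕜, nrad T ≤ nrad (T + lam • A)) ↔ f₀ (A x₀) = 0 := by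
  have hMW₀ : (x₀, f₀) ∈ MW T := hM ▸ ⟨1, norm_one, by simp⟩
  have hν : 0 < nrad T :=
    nrad_pos_of_MW_subset hT (MW_subset_normingPairs T hMW₀) hM.subset
  exact ⟨apply_eq_zero_of_forall_nrad_le_nrad_add_smul hMW₀ hM.subset hν,
    nrad_le_nrad_add_smul_of_apply_eq_zero hMW₀⟩

/-- if `M_{W(T)} = { (μx₀, conj(μ)x₀*) : |μ| = 1 }` for a fixed pair
`(x₀, x₀*)` with `x₀*(x₀) = 1 = ‖x₀‖ = ‖x₀*‖`, then `T ⊥_B^w A ↔ x₀*(A x₀) = 0`. -/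
theorem nu_orthogonality_single_attainment (𝕜 X : Type*) [RCLike 𝕜] [NormedAddCommGroup X]
    [NormedSpace 𝕜 X] [FiniteDimensional 𝕜 X]
    (T A : X →L[𝕜] X) (hT : T ≠ 0) (hA : A ≠ 0)
    (x₀ : X) (f₀ : X →L[𝕜] 𝕜) (hx₀ : ‖x₀‖ = 1) (hf₀ : ‖f₀‖ = 1) (hfx : f₀ x₀ = 1)
    (hM : MW T = {p | ∃ μ : 𝕜, ‖μ‖ = 1 ∧ p = (μ • x₀, (starRingEnd 𝕜) μ • f₀)}) :
    (∀ lam : 𝕜, nrad T ≤ nrad (T + lam • A)) ↔ f₀ (A x₀) = 0 :=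
  nu_orthogonality_single_attainment_general 𝕜 X T A hT x₀ f₀ hM
end

section
/- Let X be a Banach space and T a nonzero bounded operator with numerical radius norm. Suppose that whenever T ⊥_B^w A, every sequence (x_n, x_n*) in J with x_n*(T x_n) → σ, |σ| = ‖T‖_w, has the property that every subsequential limit of (x_n*(A x_n)) is zero. Then T is nu-smooth: T ⊥_B^w A and T ⊥_B^w B imply T ⊥_B^w (A + B). -/
/-! Take a sequence `(xₙ, fₙ) ∈ J` along which `|fₙ (T xₙ)|` tends to `‖T‖_w` and, by compactness
of a closed ball of scalars, pass to a subsequence with `fₙ (T xₙ) → σ`. For `A` with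
`T ⊥_B^w A` the bounded scalar sequence `fₙ (A xₙ)` has only the subsequential limit `0`, so it
tends to `0`. Hence `fₙ ((T + λ(A + B)) xₙ) → σ`, and `‖T‖_w = |σ| ≤ ‖T + λ(A + B)‖_w`. -/

open Filter Topology

theorem tendsto_of_forall_subseq_limit_eq {E : Type*} [PseudoMetricSpace E] [ProperSpace E]
    {u : ℕ → E} (hu : Bornology.IsBounded (Set.range u)) {a : E}
    (h : ∀ φ : ℕ → ℕ, StrictMono φ → ∀ L : E, Tendsto (u ∘ φ) atTop (𝓝 L) → L = a) :
    Tendsto u atTop (𝓝 a) := by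
  refine tendsto_of_subseq_tendsto fun ns hns => ?_
  obtain ⟨ψ, -, hnsψ⟩ := strictMono_subseq_of_tendsto_atTop hns
  obtain ⟨L, -, χ, hχ, hL⟩ := tendsto_subseq_of_bounded hu fun n => Set.mem_range_self (ns (ψ n))
  exact ⟨ψ ∘ χ, h _ (hnsψ.comp hχ) L hL ▸ hL⟩

section NumericalRadius

variable {𝕜 X : Type*} [RCLike 𝕜] [NormedAddCommGroup X] [NormedSpace 𝕜 X]

theorem norm_apply_apply_le_opNorm_s10 (S : X →L[𝕜] X) {x : X} {f : X →L[𝕜] 𝕜} (hx : ‖x‖ = 1)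
    (hf : ‖f‖ = 1) : ‖f (S x)‖ ≤ ‖S‖ :=
  calc ‖f (S x)‖ ≤ ‖f‖ * ‖S x‖ := f.le_opNorm _
    _ ≤ ‖S‖ := by simpa [hf, hx] using S.le_opNorm x

theorem isBounded_range_apply_apply (S : X →L[𝕜] X) {x : ℕ → X} {f : ℕ → X →L[𝕜] 𝕜}
    (hJ : ∀ n, ‖x n‖ = 1 ∧ ‖f n‖ = 1 ∧ f n (x n) = 1) :
    Bornology.IsBounded (Set.range fun n => f n (S (x n))) :=
  isBounded_iff_forall_norm_le.2
    ⟨‖S‖, Set.forall_mem_range.2 fun n => norm_apply_apply_le_opNorm_s10 S (hJ n).1 (hJ n).2.1⟩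

theorem bddAbove_nradSet (S : X →L[𝕜] X) :
    BddAbove {r : ℝ | ∃ (x : X) (f : X →L[𝕜] 𝕜), ‖x‖ = 1 ∧ ‖f‖ = 1 ∧ f x = 1 ∧
      r = ‖f (S x)‖} :=
  ⟨‖S‖, by
    rintro _ ⟨x, f, hx, hf, -, rfl⟩
    exact norm_apply_apply_le_opNorm_s10 S hx hf⟩

theorem nonempty_nradSet [Nontrivial X] (S : X →L[𝕜] X) :
    {r : ℝ | ∃ (x : X) (f : X →L[𝕜] 𝕜), ‖x‖ = 1 ∧ ‖f‖ = 1 ∧ f x = 1 ∧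
      r = ‖f (S x)‖}.Nonempty := by
  obtain ⟨v, hv⟩ := exists_ne (0 : X)
  have hu : ‖(‖v‖⁻¹ : 𝕜) • v‖ = 1 := norm_smul_inv_norm hv
  obtain ⟨g, hg, hgu⟩ := exists_dual_vector 𝕜 _ (hu ▸ one_ne_zero)
  exact ⟨_, _, g, hu, hg, by rw [hgu, hu, RCLike.ofReal_one], rfl⟩

theorem norm_apply_apply_le_nrad_s10 (S : X →L[𝕜] X) {x : X} {f : X →L[𝕜] 𝕜} (hx : ‖x‖ = 1)
    (hf : ‖f‖ = 1) (hfx : f x = 1) : ‖f (S x)‖ ≤ nrad S :=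
  le_csSup (bddAbove_nradSet S) ⟨x, f, hx, hf, hfx, rfl⟩

theorem norm_le_nrad_of_tendsto (S : X →L[𝕜] X) {x : ℕ → X} {f : ℕ → X →L[𝕜] 𝕜}
    (hJ : ∀ n, ‖x n‖ = 1 ∧ ‖f n‖ = 1 ∧ f n (x n) = 1) {σ : 𝕜}
    (hσ : Tendsto (fun n => f n (S (x n))) atTop (𝓝 σ)) : ‖σ‖ ≤ nrad S :=
  le_of_tendsto' hσ.norm fun n => norm_apply_apply_le_nrad_s10 S (hJ n).1 (hJ n).2.1 (hJ n).2.2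

theorem exists_seq_tendsto_of_norm_eq_nrad [Nontrivial X] (S : X →L[𝕜] X) :
    ∃ (x : ℕ → X) (f : ℕ → X →L[𝕜] 𝕜) (σ : 𝕜),
      (∀ n, ‖x n‖ = 1 ∧ ‖f n‖ = 1 ∧ f n (x n) = 1) ∧
      Tendsto (fun n => f n (S (x n))) atTop (𝓝 σ) ∧ ‖σ‖ = nrad S := by
  obtain ⟨r, -, hr, hrS⟩ := exists_seq_tendsto_sSup (nonempty_nradSet S) (bddAbove_nradSet S)
  choose x f hx hf hfx hrx using hrS
  have hJ : ∀ n, ‖x n‖ = 1 ∧ ‖f n‖ = 1 ∧ f n (x n) = 1 := fun n => ⟨hx n, hf n, hfx n⟩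
  obtain ⟨σ, -, φ, hφ, hσ⟩ :=
    tendsto_subseq_of_bounded (isBounded_range_apply_apply S hJ) fun n => Set.mem_range_self n
  refine ⟨x ∘ φ, f ∘ φ, σ, fun n => hJ (φ n), hσ, tendsto_nhds_unique hσ.norm ?_⟩
  have hr' : Tendsto (r ∘ φ) atTop (𝓝 (nrad S)) := hr.comp hφ.tendsto_atTop
  exact hr'.congr fun n => hrx (φ n)

end NumericalRadius

theorem nu_smooth_of_subsequential_limits_general (𝕜 X : Type*) [RCLike 𝕜] [NormedAddCommGroup X]
    [NormedSpace 𝕜 X] (T : X →L[𝕜] X) (hT : T ≠ 0)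
    (h : ∀ A : X →L[𝕜] X, (∀ lam : 𝕜, nrad T ≤ nrad (T + lam • A)) →
      ∀ (x : ℕ → X) (f : ℕ → X →L[𝕜] 𝕜),
        (∀ n, ‖x n‖ = 1 ∧ ‖f n‖ = 1 ∧ f n (x n) = 1) →
        ∀ σ : 𝕜, Tendsto (fun n => f n (T (x n))) atTop (𝓝 σ) → ‖σ‖ = nrad T →
        ∀ (φ : ℕ → ℕ), StrictMono φ → ∀ L : 𝕜,
          Tendsto (fun k => f (φ k) (A (x (φ k)))) atTop (𝓝 L) → L = 0) :
    ∀ A B : X →L[𝕜] X, (∀ lam : 𝕜, nrad T ≤ nrad (T + lam • A)) →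
      (∀ lam : 𝕜, nrad T ≤ nrad (T + lam • B)) →
      (∀ lam : 𝕜, nrad T ≤ nrad (T + lam • (A + B))) := by
  intro A B hA hB lam
  obtain ⟨v, hv⟩ := DFunLike.ne_iff.1 hT
  have : Nontrivial X := nontrivial_of_ne v 0 fun hv0 => hv (by simp [hv0])
  obtain ⟨x, f, σ, hJ, hσ, hσT⟩ := exists_seq_tendsto_of_norm_eq_nrad T
  have tendsto_zero : ∀ A : X →L[𝕜] X, (∀ lam : 𝕜, nrad T ≤ nrad (T + lam • A)) →
      Tendsto (fun n => f n (A (x n))) atTop (𝓝 0) := fun A hA =>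
    tendsto_of_forall_subseq_limit_eq (isBounded_range_apply_apply A hJ)
      (h A hA x f hJ σ hσ hσT)
  have hsum : Tendsto (fun n => f n ((T + lam • (A + B)) (x n))) atTop (𝓝 σ) := by
    simpa [mul_add] using hσ.add (((tendsto_zero A hA).add (tendsto_zero B hB)).const_mul lam)
  exact hσT ▸ norm_le_nrad_of_tendsto _ hJ hsum

/-- if for every `A` with `T ⊥_B^w A` and every sequence `(x_n, x_n*) ∈ J`
with `x_n*(T x_n) → σ`, `|σ| = ‖T‖_w`, every subsequential limit of `(x_n*(A x_n))` is
zero, then `T` is nu-smooth. -/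
theorem nu_smooth_of_subsequential_limits (𝕜 X : Type*) [RCLike 𝕜] [NormedAddCommGroup X]
    [NormedSpace 𝕜 X] [CompleteSpace X] (T : X →L[𝕜] X) (hT : T ≠ 0)
    (h : ∀ A : X →L[𝕜] X, (∀ lam : 𝕜, nrad T ≤ nrad (T + lam • A)) →
      ∀ (x : ℕ → X) (f : ℕ → X →L[𝕜] 𝕜),
        (∀ n, ‖x n‖ = 1 ∧ ‖f n‖ = 1 ∧ f n (x n) = 1) →
        ∀ σ : 𝕜, Tendsto (fun n => f n (T (x n))) atTop (𝓝 σ) → ‖σ‖ = nrad T →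
        ∀ (φ : ℕ → ℕ), StrictMono φ → ∀ L : 𝕜,
          Tendsto (fun k => f (φ k) (A (x (φ k)))) atTop (𝓝 L) → L = 0) :
    ∀ A B : X →L[𝕜] X, (∀ lam : 𝕜, nrad T ≤ nrad (T + lam • A)) →
      (∀ lam : 𝕜, nrad T ≤ nrad (T + lam • B)) →
      (∀ lam : 𝕜, nrad T ≤ nrad (T + lam • (A + B))) :=
  nu_smooth_of_subsequential_limits_general 𝕜 X T hT h
end

section
/- Let Z = X ⊕_∞ ℝ where X is the two-dimensional real space whose unit ball is the regular hexagon with vertices ±(1,0), ±(1/2,√3/2), ±(−1/2,√3/2). Define g(x,y,z) = (x + √3 y − z)/3 and T(v) = g(v)·u with u = (−1,0,0). Then ‖T‖ = 1, the norm attainment set of T is {±x₅} with x₅ = (−1/2,−√3/2,1), and T x₅ = −u. -/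
open Real

/-- The regular hexagon norm on `ℝ²`:
`‖(x,y)‖ = (√3|y| + |x| + ||y|/√3 − |x||)/2`. -/
noncomputable def hexNorm (x y : ℝ) : ℝ :=
  (Real.sqrt 3 * |y| + |x| + |(|y| / Real.sqrt 3 - |x|)|) / 2

private lemma s3_mul : Real.sqrt 3 * Real.sqrt 3 = 3 := Real.mul_self_sqrt (by norm_num)

private lemma s3_pos : (0:ℝ) < Real.sqrt 3 := Real.sqrt_pos.mpr (by norm_num)

private lemma hexNorm_neg (x y : ℝ) : hexNorm (-x) (-y) = hexNorm x y := by
  simp [hexNorm]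

private lemma hex_key_le (x y z : ℝ) :
    |(x + Real.sqrt 3 * y - z) / 3| ≤ max (hexNorm x y) |z| := by
  set M := max (hexNorm x y) |z| with hM
  have hm1 : hexNorm x y ≤ M := le_max_left _ _
  have hm2 : |z| ≤ M := le_max_right _ _
  have h1 : Real.sqrt 3 * y ≤ Real.sqrt 3 * |y| :=
    mul_le_mul_of_nonneg_left (le_abs_self y) s3_pos.le
  have h2 : -(Real.sqrt 3 * |y|) ≤ Real.sqrt 3 * y := by
    have := mul_le_mul_of_nonneg_left (neg_abs_le y) s3_pos.le
    linarith [this]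
  have hc : 0 ≤ |(|y| / Real.sqrt 3 - |x|)| := abs_nonneg _
  unfold hexNorm at hm1
  rw [abs_div, show |(3:ℝ)| = 3 by norm_num, div_le_iff₀ (by norm_num : (0:ℝ) < 3),
    abs_le]
  constructor
  · linarith [le_abs_self x, neg_abs_le x, le_abs_self z, neg_abs_le z]
  · linarith [le_abs_self x, neg_abs_le x, le_abs_self z, neg_abs_le z]

private lemma hex_eq_case (x y z : ℝ) (h : x + Real.sqrt 3 * y - z = 3)
    (hhex : hexNorm x y ≤ 1) (hz : |z| ≤ 1) :
    x = 1 / 2 ∧ y = Real.sqrt 3 / 2 ∧ z = -1 := by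
  have s3 := s3_mul
  have s3p := s3_pos
  unfold hexNorm at hhex
  have hxa : x ≤ |x| := le_abs_self x
  have hyb : Real.sqrt 3 * y ≤ Real.sqrt 3 * |y| :=
    mul_le_mul_of_nonneg_left (le_abs_self y) s3p.le
  have hza : -z ≤ |z| := neg_le_abs z
  have hzb : z ≤ |z| := le_abs_self z
  have hc0 : 0 ≤ |(|y| / Real.sqrt 3 - |x|)| := abs_nonneg _
  have hsum : 2 ≤ |x| + Real.sqrt 3 * |y| := by linarith
  have hc : |(|y| / Real.sqrt 3 - |x|)| = 0 := le_antisymm (by linarith) hc0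
  have hd : |y| / Real.sqrt 3 - |x| = 0 := abs_eq_zero.mp hc
  have hba : |y| = Real.sqrt 3 * |x| := by
    field_simp at hd
    linarith
  have hsum2 : |x| + Real.sqrt 3 * |y| ≤ 2 := by linarith
  have h4 : Real.sqrt 3 * |y| = 3 * |x| := by
    rw [hba]; linear_combination |x| * s3
  have hax : |x| = 1 / 2 := by linarith
  have hby : Real.sqrt 3 * |y| = 3 / 2 := by linarith
  have hxeq : x = 1 / 2 := by linarith
  have hsy : Real.sqrt 3 * y = 3 / 2 := by linarith
  refine ⟨hxeq, ?_, by linarith⟩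
  have h1 : Real.sqrt 3 * y = Real.sqrt 3 * (Real.sqrt 3 / 2) := by
    rw [hsy]; linear_combination (-1/2 : ℝ) * s3
  exact mul_left_cancel₀ (ne_of_gt s3p) h1

/-- Let `Z = X ⊕_∞ ℝ` where `X` has the regular hexagonal unit ball, i.e.
`Z ≅ ℝ³` with `‖(x,y,z)‖ = max(hexNorm x y, |z|)`. With `g(x,y,z) = (x + √3 y − z)/3`,
`u = (−1,0,0)` and `T v = g(v) • u`, we have `‖T‖ = 1`, the norm attainment set of `T`
is `{x₅, −x₅}` where `x₅ = (−1/2, −√3/2, 1)`, and `T x₅ = −u`. -/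
theorem hexagonal_prism_example (Z : Type*) [NormedAddCommGroup Z] [NormedSpace ℝ Z]
    (e : Z ≃ₗ[ℝ] ℝ × ℝ × ℝ)
    (hnorm : ∀ v : Z, ‖v‖ = max (hexNorm (e v).1 (e v).2.1) |(e v).2.2|)
    (u : Z) (hu : e u = (-1, 0, 0))
    (T : Z →L[ℝ] Z)
    (hT : ∀ v : Z, T v = (((e v).1 + Real.sqrt 3 * (e v).2.1 - (e v).2.2) / 3) • u) :
    ‖T‖ = 1 ∧
    {v : Z | ‖v‖ = 1 ∧ ‖T v‖ = ‖T‖} =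
      {e.symm (-(1 / 2), -(Real.sqrt 3 / 2), 1), -e.symm (-(1 / 2), -(Real.sqrt 3 / 2), 1)} ∧
    T (e.symm (-(1 / 2), -(Real.sqrt 3 / 2), 1)) = -u := by
  have s3 := s3_mul
  have s3p := s3_pos
  have hu1 : ‖u‖ = 1 := by
    rw [hnorm u, hu]
    norm_num [hexNorm]
  have normTv : ∀ v : Z, ‖T v‖ =
      |((e v).1 + Real.sqrt 3 * (e v).2.1 - (e v).2.2) / 3| := by
    intro v
    rw [hT, norm_smul, hu1, mul_one, Real.norm_eq_abs]
  set w : Z := e.symm (-(1 / 2), -(Real.sqrt 3 / 2), 1) with hw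
  have hew : e w = (-(1 / 2), -(Real.sqrt 3 / 2), 1) := e.apply_symm_apply _
  have hwnorm : ‖w‖ = 1 := by
    rw [hnorm w, hew]
    have h1 : |(-(Real.sqrt 3 / 2) : ℝ)| = Real.sqrt 3 / 2 := by
      rw [abs_neg, abs_of_nonneg]; positivity
    have h2 : Real.sqrt 3 / 2 / Real.sqrt 3 = 1 / 2 := by
      rw [div_right_comm, div_self (ne_of_gt s3p)]
    have h3 : Real.sqrt 3 * (Real.sqrt 3 / 2) = 3 / 2 := by
      linear_combination (1/2 : ℝ) * s3
    unfold hexNorm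
    simp only
    rw [h1, show |(-(1/2):ℝ)| = 1/2 by norm_num, h2, h3,
      show |((1:ℝ)/2 - 1/2)| = 0 by norm_num]
    norm_num
  have hgw : ((e w).1 + Real.sqrt 3 * (e w).2.1 - (e w).2.2) / 3 = -1 := by
    rw [hew]
    simp only
    linear_combination (-1/6 : ℝ) * s3
  have hTw : T w = -u := by
    rw [hT w, hgw, neg_one_smul]
  have hTwnorm : ‖T w‖ = 1 := by rw [hTw, norm_neg, hu1]
  have hTop : ‖T‖ = 1 := by
    apply le_antisymm
    · apply ContinuousLinearMap.opNorm_le_bound T zero_le_one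
      intro v
      rw [normTv v, one_mul, hnorm v]
      exact hex_key_le _ _ _
    · have := T.le_opNorm w
      rw [hTwnorm, hwnorm, mul_one] at this
      exact this
  refine ⟨hTop, ?_, hTw⟩
  ext v
  simp only [Set.mem_setOf_eq, Set.mem_insert_iff, Set.mem_singleton_iff]
  constructor
  · rintro ⟨hv1, hv2⟩
    rw [hTop, normTv v] at hv2
    have habs : |(e v).1 + Real.sqrt 3 * (e v).2.1 - (e v).2.2| = 3 := by
      rw [abs_div, show |(3:ℝ)| = 3 by norm_num] at hv2
      linarith
    have hmax : max (hexNorm (e v).1 (e v).2.1) |(e v).2.2| = 1 := by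
      rw [← hnorm v]; exact hv1
    have hhex : hexNorm (e v).1 (e v).2.1 ≤ 1 := by
      rw [← hmax]; exact le_max_left _ _
    have hz : |(e v).2.2| ≤ 1 := by
      rw [← hmax]; exact le_max_right _ _
    rcases (abs_eq (by norm_num : (0:ℝ) ≤ 3)).mp habs with h | h
    · right
      obtain ⟨hx, hy, hz'⟩ := hex_eq_case _ _ _ h hhex hz
      have hev : e v = (1 / 2, Real.sqrt 3 / 2, -1) := by
        rw [show ((1:ℝ)/2, Real.sqrt 3 / 2, (-1:ℝ)) =
          ((e v).1, (e v).2.1, (e v).2.2) by rw [hx, hy, hz']]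
      have hveq : v = e.symm (1 / 2, Real.sqrt 3 / 2, -1) := by
        rw [← hev, e.symm_apply_apply]
      rw [hveq, hw, ← map_neg]
      congr 1
      simp [Prod.ext_iff]
    · left
      have h' : (-(e v).1) + Real.sqrt 3 * (-(e v).2.1) - (-(e v).2.2) = 3 := by
        linarith
      have hhex' : hexNorm (-(e v).1) (-(e v).2.1) ≤ 1 := by
        rw [hexNorm_neg]; exact hhex
      have hz2 : |(-(e v).2.2)| ≤ 1 := by rw [abs_neg]; exact hz
      obtain ⟨hx, hy, hz'⟩ := hex_eq_case _ _ _ h' hhex' hz2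
      have hev : e v = (-(1 / 2), -(Real.sqrt 3 / 2), 1) := by
        rw [show ((-(1/2):ℝ), -(Real.sqrt 3 / 2), (1:ℝ)) =
          ((e v).1, (e v).2.1, (e v).2.2) by
            rw [show (e v).1 = -(1/2) by linarith,
                show (e v).2.1 = -(Real.sqrt 3 / 2) by linarith,
                show (e v).2.2 = 1 by linarith]]
      rw [hw, ← hev, e.symm_apply_apply]
  · rintro (rfl | rfl)
    · exact ⟨hwnorm, by rw [hTwnorm, hTop]⟩
    · constructor
      · rw [norm_neg, hwnorm]
      · rw [map_neg, norm_neg, hTwnorm, hTop]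
end

section
/- Let X be a Banach space over ℝ or ℂ and T, A bounded operators. If there exists a sequence of pairs (x_n, x_n*) with x_n ∈ S_X, x_n* ∈ J(x_n), such that x_n*(T x_n) → σ with |σ| = ‖T‖_w and x_n*(A x_n) → 0, then ‖T + λA‖_w ≥ ‖T‖_w for all scalars λ, i.e., T ⊥_B^w A. -/
open Filter Topology

/-- if there is a sequence `(x_n, x_n*)` with `x_n ∈ S_X`, `x_n* ∈ J(x_n)`,
such that `x_n*(T x_n) → σ` with `|σ| = ‖T‖_w` and `x_n*(A x_n) → 0`, then
`‖T + λA‖_w ≥ ‖T‖_w` for all scalars `λ`, i.e. `T ⊥_B^w A`. -/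
theorem nu_orthogonal_of_sequence (𝕜 X : Type*) [RCLike 𝕜] [NormedAddCommGroup X]
    [NormedSpace 𝕜 X] [CompleteSpace X] (T A : X →L[𝕜] X)
    (x : ℕ → X) (f : ℕ → X →L[𝕜] 𝕜)
    (hJ : ∀ n, ‖x n‖ = 1 ∧ ‖f n‖ = 1 ∧ f n (x n) = 1)
    (σ : 𝕜) (hσ : Tendsto (fun n => f n (T (x n))) atTop (𝓝 σ)) (hσn : ‖σ‖ = nrad T)
    (hA : Tendsto (fun n => f n (A (x n))) atTop (𝓝 (0 : 𝕜))) :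
    ∀ lam : 𝕜, nrad T ≤ nrad (T + lam • A) := by
  intro lam
  set S := T + lam • A with hS
  have hbdd : BddAbove {r : ℝ | ∃ (x : X) (f : X →L[𝕜] 𝕜),
      ‖x‖ = 1 ∧ ‖f‖ = 1 ∧ f x = 1 ∧ r = ‖f (S x)‖} := by
    refine ⟨‖S‖, ?_⟩
    rintro r ⟨y, g, hy, hg, -, rfl⟩
    calc ‖g (S y)‖ ≤ ‖g‖ * ‖S y‖ := g.le_opNorm _
      _ ≤ ‖g‖ * (‖S‖ * ‖y‖) := by
          exact mul_le_mul_of_nonneg_left (S.le_opNorm _) (norm_nonneg _)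
      _ = ‖S‖ := by rw [hy, hg]; ring
  have htend : Tendsto (fun n => ‖f n (S (x n))‖) atTop (𝓝 ‖σ‖) := by
    have : Tendsto (fun n => f n (S (x n))) atTop (𝓝 σ) := by
      have := hσ.add (hA.const_smul lam)
      simpa [hS, ContinuousLinearMap.add_apply, smul_eq_mul] using this
    exact this.norm
  rw [← hσn]
  refine le_of_tendsto htend (Filter.Eventually.of_forall fun n => ?_)
  exact le_csSup hbdd ⟨x n, f n, (hJ n).1, (hJ n).2.1, (hJ n).2.2, rfl⟩
end

section
/- Let X be a Banach space, T a nonzero operator, and suppose T ⊥_B^w A and T ⊥_B^w B for nonzero A, B, and there is a subsequence of pairs (x_{n_k}, x_{n_k}*) in J along which x_{n_k}*(T x_{n_k}) → σ with |σ| = ‖T‖_w and both x_{n_k}*(A x_{n_k}) → 0 and x_{n_k}*(B x_{n_k}) → 0. Then T ⊥_B^w (A + B). -/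
open Filter Topology

/-- if `T ⊥_B^w A`, `T ⊥_B^w B` and there is a subsequence of pairs
`(x_{n_k}, x_{n_k}*) ∈ J` along which `x_{n_k}*(T x_{n_k}) → σ` with `|σ| = ‖T‖_w` and
both `x_{n_k}*(A x_{n_k}) → 0`, `x_{n_k}*(B x_{n_k}) → 0`, then `T ⊥_B^w (A + B)`. -/
theorem nu_orthogonal_add (𝕜 X : Type*) [RCLike 𝕜] [NormedAddCommGroup X]
    [NormedSpace 𝕜 X] [CompleteSpace X] (T A B : X →L[𝕜] X) (hT : T ≠ 0)
    (hA : A ≠ 0) (hB : B ≠ 0)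
    (hTA : ∀ lam : 𝕜, nrad T ≤ nrad (T + lam • A))
    (hTB : ∀ lam : 𝕜, nrad T ≤ nrad (T + lam • B))
    (x : ℕ → X) (f : ℕ → X →L[𝕜] 𝕜)
    (hJ : ∀ n, ‖x n‖ = 1 ∧ ‖f n‖ = 1 ∧ f n (x n) = 1)
    (φ : ℕ → ℕ) (hφ : StrictMono φ) (σ : 𝕜)
    (hσ : Tendsto (fun k => f (φ k) (T (x (φ k)))) atTop (𝓝 σ)) (hσn : ‖σ‖ = nrad T)
    (hA0 : Tendsto (fun k => f (φ k) (A (x (φ k)))) atTop (𝓝 (0 : 𝕜)))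
    (hB0 : Tendsto (fun k => f (φ k) (B (x (φ k)))) atTop (𝓝 (0 : 𝕜))) :
    ∀ lam : 𝕜, nrad T ≤ nrad (T + lam • (A + B)) := by
  intro lam
  set T' : X →L[𝕜] X := T + lam • (A + B) with hT'
  set S : Set ℝ := {r : ℝ | ∃ (y : X) (g : X →L[𝕜] 𝕜),
      ‖y‖ = 1 ∧ ‖g‖ = 1 ∧ g y = 1 ∧ r = ‖g (T' y)‖} with hS
  have hbdd : BddAbove S := by
    refine ⟨‖T'‖, ?_⟩
    rintro r ⟨y, g, hy, hg, _, rfl⟩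
    calc ‖g (T' y)‖ ≤ ‖g‖ * ‖T' y‖ := g.le_opNorm _
      _ ≤ 1 * (‖T'‖ * ‖y‖) := by
          rw [hg]; exact mul_le_mul_of_nonneg_left (T'.le_opNorm _) zero_le_one
      _ = ‖T'‖ := by rw [hy]; ring
  have hmem : ∀ k, ‖f (φ k) (T' (x (φ k)))‖ ∈ S := by
    intro k
    exact ⟨x (φ k), f (φ k), (hJ (φ k)).1, (hJ (φ k)).2.1, (hJ (φ k)).2.2, rfl⟩
  have htend : Tendsto (fun k => f (φ k) (T' (x (φ k)))) atTop (𝓝 σ) := by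
    have : (fun k => f (φ k) (T' (x (φ k)))) =
        fun k => f (φ k) (T (x (φ k))) + lam * (f (φ k) (A (x (φ k))) + f (φ k) (B (x (φ k)))) := by
      funext k
      simp [hT', mul_add]
    rw [this]
    have := hσ.add ((hA0.add hB0).const_mul lam)
    simpa using this
  have hnorm : Tendsto (fun k => ‖f (φ k) (T' (x (φ k)))‖) atTop (𝓝 ‖σ‖) := htend.norm
  have : ‖σ‖ ≤ sSup S :=
    le_of_tendsto hnorm (Eventually.of_forall fun k => le_csSup hbdd (hmem k))
  calc nrad T = ‖σ‖ := hσn.symm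
    _ ≤ sSup S := this
    _ = nrad T' := rfl
end
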